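/- Let R be a finite root system of type a Cartan scheme C with connected Weyl groupoid, X an object, and w the unique longest element of the set of morphisms with target X with reduced expression w = s_{i_1}⋯s_{i_m}, m = ℓ(w). Then {β_k := id_X s_{i_1}⋯s_{i_{k-1}}(α_{i_k}) | 1 ≤ k ≤ m} equals the set Δ^X_+ of positive roots at X. -/

import Mathlib

/-- A Cartan scheme `C = C(I, X, (r_i), (C^X))`:  a finite nonempty index set `I`,
a set of objects `X`, involutive maps `r i : X → X` (axiom (C1)), and for each object
a generalized Cartan matrix `c x : I → I → ℤ` satisfying axiom (C2). -/
structure CartanScheme (I X : Type*) [Fintype I] [DecidableEq I] [Nonempty I] [Nonempty X] where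
  r : I → X → X
  c : X → I → I → ℤ
  r_invol : ∀ i x, r i (r i x) = x
  c_diag : ∀ x i, c x i i = 2
  c_offdiag_nonpos : ∀ x i j, i ≠ j → c x i j ≤ 0
  c_zero_symm : ∀ x i j, c x i j = 0 → c x j i = 0
  c2 : ∀ x i j, c (r i x) i j = c x i j

namespace CartanScheme

variable {I X : Type*} [Fintype I] [DecidableEq I] [Nonempty I] [Nonempty X]

/-- The standard basis vector `α_i` of `ℤ^I`. -/
def alpha (i : I) : I → ℤ := Pi.single i 1

/-- The reflection `s_i^X ∈ Aut(ℤ^I)`, determined by `s_i^X (α_j) = α_j - c_{ij}^X • α_i`. -/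
def s (C : CartanScheme I X) (x : X) (i : I) : (I → ℤ) → (I → ℤ) :=
  fun v => v - (∑ j, C.c x i j * v j) • alpha i

/-- The source object of the morphism `id_x s_{i_1} ⋯ s_{i_m}` of the Weyl groupoid,
represented by the word `[i_1, …, i_m]` with target `x`;  it equals
`r_{i_m} ⋯ r_{i_1}(x)`. -/
def src (C : CartanScheme I X) : X → List I → X
  | x, [] => x
  | x, i :: t => C.src (C.r i x) t

/-- The action on `ℤ^I` of the morphism `id_x s_{i_1} ⋯ s_{i_m}` of the Weyl groupoid,
namely `s_{i_1}^{r_{i_1}(x)} ∘ s_{i_2}^{r_{i_2} r_{i_1}(x)} ∘ ⋯`. -/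
def wmap (C : CartanScheme I X) : X → List I → (I → ℤ) → (I → ℤ)
  | _, [] => id
  | x, i :: t => (C.s (C.r i x) i) ∘ (C.wmap (C.r i x) t)

/-- The list of roots `β_k = s_{i_1}^{r_{i_1}(x)} ⋯ s_{i_{k-1}}^{r_{i_{k-1}} ⋯ r_{i_1}(x)} (α_{i_k})`,
`k = 1, …, m`, associated with the word `(i_1, …, i_m)` and the object `x`. -/
def betas (C : CartanScheme I X) : X → List I → List (I → ℤ)
  | _, [] => []
  | x, i :: t => alpha i :: ((C.betas (C.r i x) t).map (C.s (C.r i x) i))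

/-- The length `ℓ` of the morphism of the Weyl groupoid represented by the word `w`
(with target `x`):  the minimal length of a word representing the same morphism. -/
noncomputable def len (C : CartanScheme I X) (x : X) (w : List I) : ℕ :=
  sInf {m | ∃ w' : List I, w'.length = m ∧
    C.src x w' = C.src x w ∧ C.wmap x w' = C.wmap x w}

end CartanScheme

/-- A root system `R` of type a Cartan scheme `C`:  subsets `Δ x ⊆ ℤ^I` satisfying
the axioms (R1)–(R4). -/
structure RootSystemOf {I X : Type*} [Fintype I] [DecidableEq I] [Nonempty I] [Nonempty X]
    (C : CartanScheme I X) where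
  Δ : X → Set (I → ℤ)
  R1 : ∀ x v, v ∈ Δ x → 0 ≤ v ∨ 0 ≤ -v
  R1' : ∀ x v, v ∈ Δ x → -v ∈ Δ x
  R2_mem : ∀ x i, CartanScheme.alpha i ∈ Δ x
  R2 : ∀ x i v, v ∈ Δ x → (∃ n : ℤ, v = n • CartanScheme.alpha i) →
    v = CartanScheme.alpha i ∨ v = - CartanScheme.alpha i
  R3 : ∀ x i, (C.s x i) '' (Δ x) = Δ (C.r i x)
  R4 : ∀ x i j, i ≠ j →
    ∀ _ : {v ∈ Δ x | ∃ a b : ℕ, v = (a : ℤ) • CartanScheme.alpha i +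
        (b : ℤ) • CartanScheme.alpha j}.Finite,
      (fun y => C.r i (C.r j y))^[{v ∈ Δ x | ∃ a b : ℕ,
        v = (a : ℤ) • CartanScheme.alpha i + (b : ℤ) • CartanScheme.alpha j}.ncard] x = x

namespace RootSystemOf

open CartanScheme

variable {I X : Type*} [Fintype I] [DecidableEq I] [Nonempty I] [Nonempty X]
variable {C : CartanScheme I X}

/-- The set of positive roots `Δ^x_+` at the object `x`. -/
def pos (R : RootSystemOf C) (x : X) : Set (I → ℤ) := {v ∈ R.Δ x | 0 ≤ v}

open Classical in
/-- The number of indices `k` with `λ = ± β_k` in a list of roots. -/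
noncomputable def countSigned (lam : I → ℤ) : List (I → ℤ) → ℕ
  | [] => 0
  | b :: t => (if b = lam ∨ b = -lam then 1 else 0) + countSigned lam t

/-- The set `Λ_+^x(i_1, …, i_m)` of positive roots `λ` such that the number of `k`
with `λ = ± β_k` is odd. -/
noncomputable def LambdaPlus (R : RootSystemOf C) (x : X) (w : List I) : Set (I → ℤ) :=
  {lam | lam ∈ R.Δ x ∧ 0 ≤ lam ∧ Odd (countSigned lam (C.betas x w))}

/-- The right Duflo order on morphisms of the Weyl groupoid with target `x`
(morphisms being represented by words):  `w₁ ≤_D w₂` iff `w₂ = w₁ u` for some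
morphism `u` with `ℓ(w₂) = ℓ(w₁) + ℓ(u)`. -/
def DufloLE (R : RootSystemOf C) (x : X) (w₁ w₂ : List I) : Prop :=
  ∃ u : List I, C.src (C.src x w₁) u = C.src x w₂ ∧
    C.wmap x w₂ = C.wmap x w₁ ∘ C.wmap (C.src x w₁) u ∧
    C.len x w₂ = C.len x w₁ + C.len (C.src x w₁) u

end RootSystemOf

open CartanScheme RootSystemOf

set_option linter.unusedVariables false
set_option linter.unusedSectionVars false

namespace WeylAux
open CartanScheme

variable {I X : Type*} [Fintype I] [DecidableEq I] [Nonempty I] [Nonempty X]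

section Basic
variable (C : CartanScheme I X)

@[simp] lemma alpha_apply (i k : I) : (alpha i : I → ℤ) k = if k = i then 1 else 0 := by
  simp [alpha, Pi.single_apply]

lemma alpha_nonneg (i : I) : (0 : I → ℤ) ≤ alpha i := by
  rw [Pi.le_def]; intro k; by_cases h : k = i <;> simp [h]

lemma s_coord (x : X) (i : I) (v : I → ℤ) (k : I) :
    C.s x i v k = v k - (∑ j, C.c x i j * v j) * (if k = i then 1 else 0) := by
  simp [CartanScheme.s, alpha_apply, Pi.sub_apply, Pi.smul_apply, smul_eq_mul]

lemma s_coord_ne (x : X) (i : I) (v : I → ℤ) (k : I) (hk : k ≠ i) :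
    C.s x i v k = v k := by simp [s_coord, hk]

lemma s_lin (x : X) (i : I) (p q : ℤ) (u v : I → ℤ) :
    C.s x i (p • u + q • v) = p • C.s x i u + q • C.s x i v := by
  have h : (∑ j, C.c x i j * (p • u + q • v) j)
      = p * (∑ j, C.c x i j * u j) + q * (∑ j, C.c x i j * v j) := by
    rw [Finset.mul_sum, Finset.mul_sum, ← Finset.sum_add_distrib]
    refine Finset.sum_congr rfl fun j _ => by
      simp only [Pi.add_apply, Pi.smul_apply, smul_eq_mul]; ring
  funext k
  rw [Pi.add_apply, Pi.smul_apply, Pi.smul_apply, s_coord, s_coord, s_coord, h,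
    Pi.add_apply, Pi.smul_apply, Pi.smul_apply]
  simp only [smul_eq_mul]
  ring

lemma s_alpha_sum (x : X) (i : I) : (∑ j, C.c x i j * (alpha i : I → ℤ) j) = 2 := by
  simp [alpha_apply, mul_ite, C.c_diag]

lemma s_alpha_self (x : X) (i : I) : C.s x i (alpha i) = -alpha i := by
  funext k
  rw [s_coord, s_alpha_sum]
  by_cases h : k = i <;> simp [h]

lemma s_invol (x : X) (i : I) (v : I → ℤ) : C.s x i (C.s x i v) = v := by
  have e1 : (∑ j, C.c x i j * (if j = i then (1:ℤ) else 0)) = 2 := by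
    simp [mul_ite, C.c_diag]
  have h : (∑ j, C.c x i j * C.s x i v j) = -(∑ j, C.c x i j * v j) := by
    have step : ∀ j, C.c x i j * C.s x i v j
        = C.c x i j * v j - (C.c x i j * (if j = i then (1:ℤ) else 0)) * (∑ l, C.c x i l * v l) := by
      intro j; rw [s_coord]; ring
    rw [Finset.sum_congr rfl (fun j _ => step j), Finset.sum_sub_distrib, ← Finset.sum_mul, e1]
    ring
  funext k
  rw [s_coord, h, s_coord]
  ring

lemma s_inj (x : X) (i : I) : Function.Injective (C.s x i) := by
  intro u v h
  rw [← s_invol C x i u, h, s_invol]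

lemma s_ri_eq (x : X) (i : I) : C.s (C.r i x) i = C.s x i := by
  funext v k
  simp only [s_coord]
  congr 2
  exact Finset.sum_congr rfl fun j _ => by rw [C.c2]

@[simp] lemma src_nil (x : X) : C.src x [] = x := rfl
@[simp] lemma src_cons (x : X) (i : I) (t : List I) :
    C.src x (i :: t) = C.src (C.r i x) t := rfl
@[simp] lemma wmap_nil (x : X) : C.wmap x [] = id := rfl

lemma wmap_cons (x : X) (i : I) (t : List I) :
    C.wmap x (i :: t) = C.s x i ∘ C.wmap (C.r i x) t := by
  show C.s (C.r i x) i ∘ C.wmap (C.r i x) t = _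
  rw [s_ri_eq]

lemma src_append (a : List I) : ∀ (x : X) (b : List I),
    C.src x (a ++ b) = C.src (C.src x a) b := by
  induction a with
  | nil => intro x b; rfl
  | cons i t ih => intro x b; simp only [List.cons_append, src_cons, ih]

lemma wmap_append (a : List I) : ∀ (x : X) (b : List I),
    C.wmap x (a ++ b) = C.wmap x a ∘ C.wmap (C.src x a) b := by
  induction a with
  | nil => intro x b; rfl
  | cons i t ih =>
    intro x b
    simp only [List.cons_append, wmap_cons, src_cons, ih, Function.comp_assoc]

lemma wmap_single (x : X) (i : I) : C.wmap x [i] = C.s x i := by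
  rw [wmap_cons]; rfl

lemma rev_inv (a : List I) : ∀ x : X,
    C.src (C.src x a) a.reverse = x ∧
    (∀ v, C.wmap x a (C.wmap (C.src x a) a.reverse v) = v) ∧
    (∀ v, C.wmap (C.src x a) a.reverse (C.wmap x a v) = v) := by
  induction a with
  | nil => intro x; exact ⟨rfl, fun v => rfl, fun v => rfl⟩
  | cons i t ih =>
    intro x
    obtain ⟨h1, h2, h3⟩ := ih (C.r i x)
    have hsrc : C.src x (i :: t) = C.src (C.r i x) t := rfl
    constructor
    · rw [List.reverse_cons, hsrc, src_append, h1]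
      simp [C.r_invol]
    constructor
    · intro v
      rw [List.reverse_cons, hsrc, wmap_append, h1, wmap_single, s_ri_eq, wmap_cons]
      simp only [Function.comp_apply]
      rw [h2, s_invol]
    · intro v
      rw [List.reverse_cons, hsrc, wmap_append, h1, wmap_single, s_ri_eq, wmap_cons]
      simp only [Function.comp_apply]
      rw [s_invol, h3]

lemma src_rev (a : List I) (x : X) : C.src (C.src x a) a.reverse = x :=
  (rev_inv C a x).1

lemma wmap_rev_right (a : List I) (x : X) (v : I → ℤ) :
    C.wmap x a (C.wmap (C.src x a) a.reverse v) = v := (rev_inv C a x).2.1 v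

lemma wmap_rev_left (a : List I) (x : X) (v : I → ℤ) :
    C.wmap (C.src x a) a.reverse (C.wmap x a v) = v := (rev_inv C a x).2.2 v

lemma wmap_inj (a : List I) (x : X) : Function.Injective (C.wmap x a) := by
  intro u v h
  rw [← wmap_rev_left C a x u, h, wmap_rev_left]

/-- linearity of `wmap` -/
lemma wmap_lin (a : List I) : ∀ (x : X) (p q : ℤ) (u v : I → ℤ),
    C.wmap x a (p • u + q • v) = p • C.wmap x a u + q • C.wmap x a v := by
  induction a with
  | nil => intro x p q u v; rfl
  | cons i t ih =>
    intro x p q u v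
    rw [wmap_cons]
    simp only [Function.comp_apply, ih, s_lin]

lemma wmap_zero (a : List I) (x : X) : C.wmap x a 0 = 0 := by
  have := wmap_lin C a x 0 0 0 0
  simpa using this

lemma wmap_neg (a : List I) (x : X) (v : I → ℤ) :
    C.wmap x a (-v) = - C.wmap x a v := by
  have := wmap_lin C a x (-1) 0 v 0
  simpa using this

lemma wmap_smul (a : List I) (x : X) (p : ℤ) (v : I → ℤ) :
    C.wmap x a (p • v) = p • C.wmap x a v := by
  have := wmap_lin C a x p 0 v 0
  simpa using this

lemma wmap_add (a : List I) (x : X) (u v : I → ℤ) :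
    C.wmap x a (u + v) = C.wmap x a u + C.wmap x a v := by
  have := wmap_lin C a x 1 1 u v
  simpa using this

lemma wmap_finsum (a : List I) (x : X) {γ : Type*} (s : Finset γ) (f : γ → (I → ℤ)) :
    C.wmap x a (∑ k ∈ s, f k) = ∑ k ∈ s, C.wmap x a (f k) := by
  classical
  induction s using Finset.induction with
  | empty => simpa using wmap_zero C a x
  | insert _ _ hk ih =>
    rw [Finset.sum_insert hk, Finset.sum_insert hk, wmap_add, ih]

lemma basis_decomp (v : I → ℤ) : v = ∑ k, v k • (alpha k : I → ℤ) := by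
  funext l
  rw [Finset.sum_apply]
  simp [alpha_apply, mul_ite]

end Basic
end WeylAux

namespace WeylAux
open CartanScheme

variable {I X : Type*} [Fintype I] [DecidableEq I] [Nonempty I] [Nonempty X]

section Words
variable (C : CartanScheme I X)

/-- Two words with the same target represent the same morphism. -/
def WEquiv (x : X) (a b : List I) : Prop :=
  C.src x a = C.src x b ∧ C.wmap x a = C.wmap x b

lemma WEquiv.refl (x : X) (a : List I) : WEquiv C x a a := ⟨rfl, rfl⟩

lemma wequiv_symm {C : CartanScheme I X} {x : X} {a b : List I} (h : WEquiv C x a b) :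
    WEquiv C x b a := ⟨h.1.symm, h.2.symm⟩

lemma wequiv_trans {C : CartanScheme I X} {x : X} {a b c : List I} (h : WEquiv C x a b)
    (h' : WEquiv C x b c) : WEquiv C x a c := ⟨h.1.trans h'.1, h.2.trans h'.2⟩

lemma wequiv_append_right {x : X} {a b : List I} (t : List I) (h : WEquiv C x a b) :
    WEquiv C x (a ++ t) (b ++ t) := by
  obtain ⟨h1, h2⟩ := h
  constructor
  · rw [src_append, src_append, h1]
  · rw [wmap_append, wmap_append, h1, h2]

lemma wequiv_append_left {x : X} (p : List I) {a b : List I}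
    (h : WEquiv C (C.src x p) a b) : WEquiv C x (p ++ a) (p ++ b) := by
  obtain ⟨h1, h2⟩ := h
  constructor
  · rw [src_append, src_append, h1]
  · rw [wmap_append, wmap_append, h2]

lemma wequiv_pair_nil (z : X) (l : I) : WEquiv C z [l, l] [] := by
  constructor
  · simp [C.r_invol]
  · have : C.wmap z [l, l] = C.s z l ∘ C.s (C.r l z) l := by
      rw [wmap_cons, wmap_single]
    rw [this, s_ri_eq]
    funext v
    simp [s_invol]

/-- deleting an adjacent equal pair anywhere -/
lemma wequiv_cancel_pair (x : X) (a b : List I) (l : I) :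
    WEquiv C x (a ++ l :: l :: b) (a ++ b) := by
  have h0 : WEquiv C (C.src x a) ([l, l] ++ b) ([] ++ b) :=
    wequiv_append_right C b (wequiv_pair_nil C _ l)
  have := wequiv_append_left C a h0
  simpa using this

/-- `w ++ rev v ++ v ≡ w` -/
lemma wequiv_rev_cancel (x : X) (w v : List I) :
    WEquiv C x ((w ++ v.reverse) ++ v) w := by
  rw [List.append_assoc]
  have h0 : WEquiv C (C.src x w) (v.reverse ++ v) [] := by
    constructor
    · rw [src_append]
      have := src_rev C v.reverse (C.src x w)
      rwa [List.reverse_reverse] at this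
    · rw [wmap_append, wmap_nil]
      funext u
      have := wmap_rev_right C v.reverse (C.src x w) u
      rw [List.reverse_reverse] at this
      simpa only [Function.comp_apply, id_eq] using this
  have h2 := wequiv_append_left C w h0
  rw [List.append_nil] at h2
  exact h2

lemma wequiv_of_parts {C : CartanScheme I X} {x : X} {a b : List I}
    (h1 : C.src x a = C.src x b) (h2 : C.wmap x a = C.wmap x b) : WEquiv C x a b := ⟨h1, h2⟩

end Words
end WeylAux

namespace WeylAux
open CartanScheme

variable {I X : Type*} [Fintype I] [DecidableEq I] [Nonempty I] [Nonempty X]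

section Len
variable (C : CartanScheme I X)

lemma len_set_def (x : X) (w : List I) :
    C.len x w = sInf {m | ∃ w' : List I, w'.length = m ∧ WEquiv C x w' w} := rfl

lemma len_le_of_equiv {x : X} {w ρ : List I} (h : WEquiv C x ρ w) :
    C.len x w ≤ ρ.length :=
  Nat.sInf_le ⟨ρ, rfl, h⟩

lemma len_le_length (x : X) (w : List I) : C.len x w ≤ w.length :=
  len_le_of_equiv C (WEquiv.refl C x w)

lemma len_exists_rep (x : X) (w : List I) :
    ∃ ρ : List I, ρ.length = C.len x w ∧ WEquiv C x ρ w := by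
  have hne : {m | ∃ w' : List I, w'.length = m ∧ WEquiv C x w' w}.Nonempty :=
    ⟨w.length, w, rfl, WEquiv.refl C x w⟩
  exact Nat.sInf_mem hne

lemma len_congr {x : X} {a b : List I} (h : WEquiv C x a b) :
    C.len x a = C.len x b := by
  have hs : {m | ∃ w' : List I, w'.length = m ∧ WEquiv C x w' a}
      = {m | ∃ w' : List I, w'.length = m ∧ WEquiv C x w' b} := by
    ext m
    constructor
    · rintro ⟨w', hl, he⟩; exact ⟨w', hl, wequiv_trans he h⟩
    · rintro ⟨w', hl, he⟩; exact ⟨w', hl, wequiv_trans he (wequiv_symm h)⟩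
  rw [len_set_def, len_set_def, hs]

lemma len_append_le (x : X) (a b : List I) :
    C.len x (a ++ b) ≤ C.len x a + C.len (C.src x a) b := by
  obtain ⟨ρa, hla, hea⟩ := len_exists_rep C x a
  obtain ⟨ρb, hlb, heb⟩ := len_exists_rep C (C.src x a) b
  have h : WEquiv C x (ρa ++ ρb) (a ++ b) :=
    wequiv_trans (wequiv_append_right C ρb hea) (wequiv_append_left C a heb)
  calc C.len x (a ++ b) ≤ (ρa ++ ρb).length := len_le_of_equiv C h
    _ = C.len x a + C.len (C.src x a) b := by rw [List.length_append, hla, hlb]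

lemma len_append_length_le (x : X) (a b : List I) :
    C.len x (a ++ b) ≤ C.len x a + b.length :=
  le_trans (len_append_le C x a b) (by
    have := len_le_length C (C.src x a) b
    omega)

/-- `len a ≤ len (a ++ b) + |b|` -/
lemma len_le_append (x : X) (a b : List I) :
    C.len x a ≤ C.len x (a ++ b) + b.length := by
  have h : WEquiv C x ((a ++ b) ++ b.reverse) a := by
    constructor
    · rw [src_append, src_append, src_rev]
    · rw [wmap_append, wmap_append]
      funext v
      simp only [Function.comp_apply]
      rw [src_append, wmap_rev_right]
  have h2 : C.len x a ≤ C.len x ((a ++ b) ++ b.reverse) := le_of_eq (len_congr C h).symm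
  calc C.len x a ≤ C.len x ((a ++ b) ++ b.reverse) := h2
    _ ≤ C.len x (a ++ b) + b.reverse.length := len_append_length_le C x (a ++ b) b.reverse
    _ = C.len x (a ++ b) + b.length := by rw [List.length_reverse]

lemma len_cons_le (z : X) (l : I) (v : List I) :
    C.len z (l :: v) ≤ 1 + C.len (C.r l z) v := by
  obtain ⟨ρ, hl, he⟩ := len_exists_rep C (C.r l z) v
  have h : WEquiv C z (l :: ρ) (l :: v) := by
    have := wequiv_append_left C [l] (x := z) (a := ρ) (b := v) (by simpa using he)
    simpa using this
  calc C.len z (l :: v) ≤ (l :: ρ).length := len_le_of_equiv C h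
    _ = 1 + C.len (C.r l z) v := by simp [hl]; omega

end Len
end WeylAux

namespace WeylAux
open CartanScheme

variable {I X : Type*} [Fintype I] [DecidableEq I] [Nonempty I] [Nonempty X]

section Roots
variable (C : CartanScheme I X) (R : RootSystemOf C)

lemma zero_not_mem (x : X) : (0 : I → ℤ) ∉ R.Δ x := by
  intro h
  obtain ⟨i⟩ := ‹Nonempty I›
  have := R.R2 x i 0 h ⟨0, by simp⟩
  rcases this with h' | h'
  · have := congrFun h' i; simp at this
  · have := congrFun h' i
    simp at this

lemma root_ne_zero {x : X} {v : I → ℤ} (h : v ∈ R.Δ x) : v ≠ 0 := by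
  intro h'; rw [h'] at h; exact zero_not_mem C R x h

lemma root_not_both {x : X} {v : I → ℤ} (h : v ∈ R.Δ x) (h1 : 0 ≤ v) (h2 : 0 ≤ -v) :
    False := by
  have : v = 0 := by
    funext k
    have a1 := h1 k
    have a2 := h2 k
    simp only [Pi.zero_apply, Pi.neg_apply] at a1 a2 ⊢
    omega
  exact root_ne_zero C R h this

lemma root_trichot {x : X} {v : I → ℤ} (h : v ∈ R.Δ x) (h1 : ¬ 0 ≤ v) : 0 ≤ -v := by
  rcases R.R1 x v h with h' | h'
  · exact absurd h' h1
  · exact h'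

lemma alpha_mem (x : X) (i : I) : (alpha i : I → ℤ) ∈ R.Δ x := R.R2_mem x i

/-- image of the root set under `wmap` -/
lemma wmap_image (a : List I) : ∀ x : X,
    C.wmap x a '' R.Δ (C.src x a) = R.Δ x := by
  induction a with
  | nil => intro x; simp
  | cons i t ih =>
    intro x
    have h1 : C.wmap x (i :: t) = C.s x i ∘ C.wmap (C.r i x) t := wmap_cons C x i t
    have h2 : C.src x (i :: t) = C.src (C.r i x) t := rfl
    rw [h1, h2, Set.image_comp, ih (C.r i x)]
    have h3 := R.R3 (C.r i x) i
    rw [s_ri_eq] at h3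
    rw [h3, C.r_invol]

lemma wmap_mem {a : List I} {x : X} {v : I → ℤ} (h : v ∈ R.Δ (C.src x a)) :
    C.wmap x a v ∈ R.Δ x := by
  rw [← wmap_image C R a x]
  exact ⟨v, h, rfl⟩

lemma wmap_surj_root {a : List I} {x : X} {u : I → ℤ} (h : u ∈ R.Δ x) :
    ∃ v ∈ R.Δ (C.src x a), C.wmap x a v = u := by
  rw [← wmap_image C R a x] at h
  exact h

/-- a nonnegative root supported on `{i}` is `α_i` -/
lemma root_single_support {x : X} {v : I → ℤ} (i : I) (h : v ∈ R.Δ x) (hp : 0 ≤ v)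
    (hs : ∀ k, k ≠ i → v k = 0) : v = alpha i := by
  have hv : v = (v i) • alpha i := by
    funext k
    by_cases hk : k = i
    · subst hk; simp
    · simp [hs k hk, hk]
  rcases R.R2 x i v h ⟨v i, hv⟩ with h' | h'
  · exact h'
  · exfalso
    have h3 := hp i
    have h2 := congrFun h' i
    simp only [Pi.neg_apply, alpha_apply, if_pos rfl, Pi.zero_apply] at h2
    simp at h2
    simp only [Pi.zero_apply] at h3
    omega

/-- Step 1' : `s_i` preserves positivity away from `α_i`. -/
lemma step1 {x : X} {v : I → ℤ} (i : I) (h : v ∈ R.Δ x) (hp : 0 ≤ v)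
    (hne : v ≠ alpha i) : C.s x i v ∈ R.Δ (C.r i x) ∧ 0 ≤ C.s x i v := by
  have hmem : C.s x i v ∈ R.Δ (C.r i x) := by
    rw [← R.R3 x i]; exact ⟨v, h, rfl⟩
  refine ⟨hmem, ?_⟩
  -- find a coordinate j ≠ i with v j > 0
  have hex : ∃ j, j ≠ i ∧ 0 < v j := by
    by_contra hcon
    push_neg at hcon
    have : ∀ k, k ≠ i → v k = 0 := by
      intro k hk
      have := hcon k hk
      have := hp k
      simp only [Pi.zero_apply] at this
      omega
    exact hne (root_single_support C R i h hp this)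
  obtain ⟨j, hj, hjpos⟩ := hex
  by_contra hneg
  have hneg' : 0 ≤ -(C.s x i v) := root_trichot C R hmem hneg
  have := hneg' j
  rw [Pi.neg_apply, s_coord_ne C x i v j hj] at this
  simp only [Pi.zero_apply] at this
  omega

/-- contrapositive form: if `s_i` sends the positive root `v` to a negative root then `v = α_i` -/
lemma step1_rev {x : X} {v : I → ℤ} (i : I) (h : v ∈ R.Δ x) (hp : 0 ≤ v)
    (hn : 0 ≤ -(C.s x i v)) : v = alpha i := by
  by_contra hne
  obtain ⟨hm, hp'⟩ := step1 C R i h hp hne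
  exact root_not_both C R hm hp' hn

end Roots
end WeylAux

namespace WeylAux
open CartanScheme

variable {I X : Type*} [Fintype I] [DecidableEq I] [Nonempty I] [Nonempty X]

section Flip
variable (C : CartanScheme I X) (R : RootSystemOf C)

/-- positive roots at the source sent to negative roots -/
def flip (x : X) (a : List I) : Set (I → ℤ) :=
  {v | v ∈ R.Δ (C.src x a) ∧ 0 ≤ v ∧ 0 ≤ -(C.wmap x a v)}

lemma flip_finite (hfin : ∀ y, (R.Δ y).Finite) (x : X) (a : List I) :
    (flip C R x a).Finite :=
  (hfin _).subset (fun v hv => hv.1)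

lemma flip_invariant {x : X} {a b : List I} (h : WEquiv C x a b) :
    flip C R x a = flip C R x b := by
  unfold flip
  rw [h.1, h.2]

lemma flip_nil (x : X) : flip C R x [] = ∅ := by
  ext v
  simp only [flip, Set.mem_setOf_eq, Set.mem_empty_iff_false, iff_false]
  rintro ⟨h1, h2, h3⟩
  exact root_not_both C R h1 h2 (by simpa using h3)

lemma wmap_concat (x : X) (a : List I) (l : I) :
    C.wmap x (a ++ [l]) = C.wmap x a ∘ C.s (C.src x a) l := by
  rw [wmap_append, wmap_single]

lemma src_concat (x : X) (a : List I) (l : I) :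
    C.src x (a ++ [l]) = C.r l (C.src x a) := by
  rw [src_append]; rfl

lemma flip_step_image (x : X) (a : List I) (l : I) :
    C.s (C.src x a) l '' (flip C R x (a ++ [l]) \ {alpha l})
      = flip C R x a \ {alpha l} := by
  set ya := C.src x a with hya
  have hsrc' : C.src x (a ++ [l]) = C.r l ya := src_concat C x a l
  have hw : C.wmap x (a ++ [l]) = C.wmap x a ∘ C.s ya l := wmap_concat C x a l
  have hss : C.s (C.r l ya) l = C.s ya l := s_ri_eq C ya l
  ext u
  constructor
  · rintro ⟨v, ⟨⟨hv1, hv2, hv3⟩, hvne⟩, rfl⟩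
    rw [hsrc'] at hv1
    have hvne' : v ≠ alpha l := by simpa using hvne
    have hst := step1 C R l hv1 hv2 hvne'
    rw [hss, C.r_invol] at hst
    refine ⟨⟨hst.1, hst.2, ?_⟩, ?_⟩
    · rw [hw] at hv3
      simpa using hv3
    · simp only [Set.mem_singleton_iff]
      intro hcon
      have hvd : v = C.s ya l (alpha l) := by
        rw [← hcon, s_invol]
      rw [s_alpha_self] at hvd
      have h5 := hv2 l
      rw [hvd] at h5
      simp at h5
  · rintro ⟨⟨hu1, hu2, hu3⟩, hune⟩
    have hune' : u ≠ alpha l := by simpa using hune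
    have hst := step1 C R l hu1 hu2 hune'
    refine ⟨C.s ya l u, ⟨⟨?_, hst.2, ?_⟩, ?_⟩, ?_⟩
    · rw [hsrc']; exact hst.1
    · rw [hw]
      simp only [Function.comp_apply, s_invol]
      exact hu3
    · simp only [Set.mem_singleton_iff]
      intro hcon
      have hud : u = C.s ya l (alpha l) := by rw [← hcon, s_invol]
      rw [s_alpha_self] at hud
      have h5 := hu2 l
      rw [hud] at h5
      simp at h5
    · rw [s_invol]

lemma flip_step_alpha (x : X) (a : List I) (l : I) :
    (alpha l ∈ flip C R x (a ++ [l]) ↔ ¬ (alpha l ∈ flip C R x a)) := by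
  set ya := C.src x a with hya
  have hsrc' : C.src x (a ++ [l]) = C.r l ya := src_concat C x a l
  have hw : C.wmap x (a ++ [l]) = C.wmap x a ∘ C.s ya l := wmap_concat C x a l
  have hroot : C.wmap x a (alpha l) ∈ R.Δ x := wmap_mem C R (alpha_mem C R _ l)
  constructor
  · rintro ⟨h1, h2, h3⟩ ⟨g1, g2, g3⟩
    rw [hw] at h3
    simp only [Function.comp_apply, s_alpha_self, wmap_neg, neg_neg] at h3
    exact root_not_both C R hroot h3 g3
  · intro hno
    refine ⟨by rw [hsrc']; exact alpha_mem C R _ l, alpha_nonneg l, ?_⟩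
    rw [hw]
    simp only [Function.comp_apply, s_alpha_self, wmap_neg, neg_neg]
    by_contra hcon
    exact hno ⟨alpha_mem C R _ l, alpha_nonneg l, root_trichot C R hroot hcon⟩

lemma flip_step (hfin : ∀ y, (R.Δ y).Finite) (x : X) (a : List I) (l : I) :
    (flip C R x (a ++ [l])).ncard = (flip C R x a).ncard + 1 ∨
    (flip C R x a).ncard = (flip C R x (a ++ [l])).ncard + 1 := by
  have hF := flip_finite C R hfin x a
  have hF' := flip_finite C R hfin x (a ++ [l])
  have hcard : (flip C R x (a ++ [l]) \ {alpha l}).ncard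
      = (flip C R x a \ {alpha l}).ncard := by
    rw [← flip_step_image C R x a l]
    exact (Set.ncard_image_of_injective _ (s_inj C (C.src x a) l)).symm
  by_cases hmem : alpha l ∈ flip C R x a
  · right
    have h1 : alpha l ∉ flip C R x (a ++ [l]) := by
      rw [flip_step_alpha C R x a l]; simp [hmem]
    rw [Set.diff_singleton_eq_self h1] at hcard
    have h2 : (flip C R x a \ {alpha l}).ncard + 1 = (flip C R x a).ncard :=
      Set.ncard_diff_singleton_add_one hmem hF
    omega
  · left
    have h1 : alpha l ∈ flip C R x (a ++ [l]) := (flip_step_alpha C R x a l).2 hmem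
    rw [Set.diff_singleton_eq_self hmem] at hcard
    have h2 : (flip C R x (a ++ [l]) \ {alpha l}).ncard + 1
        = (flip C R x (a ++ [l])).ncard :=
      Set.ncard_diff_singleton_add_one h1 hF'
    omega

lemma flip_le_length (hfin : ∀ y, (R.Δ y).Finite) (x : X) (a : List I) :
    (flip C R x a).ncard ≤ a.length ∧ (flip C R x a).ncard % 2 = a.length % 2 := by
  induction a using List.reverseRecOn with
  | nil => simp [flip_nil]
  | append_singleton t l ih =>
    obtain ⟨ih1, ih2⟩ := ih
    rcases flip_step C R hfin x t l with h | h <;>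
      · rw [List.length_append]
        simp only [List.length_singleton]
        omega

lemma len_parity (hfin : ∀ y, (R.Δ y).Finite) (x : X) (a : List I) :
    C.len x a % 2 = a.length % 2 := by
  obtain ⟨ρ, hl, he⟩ := len_exists_rep C x a
  have h1 := (flip_le_length C R hfin x ρ).2
  have h2 := (flip_le_length C R hfin x a).2
  rw [flip_invariant C R he] at h1
  omega

lemma flip_le_len (hfin : ∀ y, (R.Δ y).Finite) (x : X) (a : List I) :
    (flip C R x a).ncard ≤ C.len x a := by
  obtain ⟨ρ, hl, he⟩ := len_exists_rep C x a
  have h1 := (flip_le_length C R hfin x ρ).1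
  rw [flip_invariant C R he] at h1
  omega

lemma len_concat_ne (hfin : ∀ y, (R.Δ y).Finite) (x : X) (a : List I) (l : I) :
    C.len x (a ++ [l]) ≠ C.len x a := by
  have h1 := len_parity C R hfin x a
  have h2 := len_parity C R hfin x (a ++ [l])
  rw [List.length_append] at h2
  simp only [List.length_singleton] at h2
  omega

end Flip
end WeylAux

namespace WeylAux
open CartanScheme

variable {I X : Type*} [Fintype I] [DecidableEq I] [Nonempty I] [Nonempty X]

/-- alternating word `[i, j, i, j, ...]` of length `n` -/
def altW (i j : I) : ℕ → List I
  | 0 => []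
  | (n+1) => i :: altW j i n

/-- the `(n+1)`-st letter of the alternating word starting with `i` -/
def nlet (i j : I) (n : ℕ) : I := if n % 2 = 0 then i else j

section RankTwoA
variable (C : CartanScheme I X) (R : RootSystemOf C)

/-- words in the letters `i`, `j` -/
def InIJ (i j : I) (a : List I) : Prop := ∀ l ∈ a, l = i ∨ l = j

/-- vectors supported on `{i, j}` -/
def SpanIJ (i j : I) (v : I → ℤ) : Prop := ∀ k, k ≠ i → k ≠ j → v k = 0

/-- the positive roots at `z` supported on `{i, j}` -/
def Pset (i j : I) (z : X) : Set (I → ℤ) := {v | v ∈ R.Δ z ∧ SpanIJ i j v ∧ 0 ≤ v}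

noncomputable def Mnum (i j : I) (z : X) : ℕ := (Pset C R i j z).ncard

lemma inij_symm {i j : I} {a : List I} (h : InIJ i j a) : InIJ j i a :=
  fun l hl => (h l hl).symm

lemma inij_nil (i j : I) : InIJ i j [] := fun l hl => absurd hl List.not_mem_nil

lemma inij_append {i j : I} {a b : List I} (ha : InIJ i j a) (hb : InIJ i j b) :
    InIJ i j (a ++ b) := by
  intro l hl
  rcases List.mem_append.1 hl with h | h
  · exact ha l h
  · exact hb l h

lemma inij_reverse {i j : I} {a : List I} (h : InIJ i j a) : InIJ i j a.reverse :=
  fun l hl => h l (List.mem_reverse.1 hl)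

lemma spanij_symm {i j : I} {v : I → ℤ} (h : SpanIJ i j v) : SpanIJ j i v :=
  fun k h1 h2 => h k h2 h1

lemma pset_symm (i j : I) (z : X) : Pset C R i j z = Pset C R j i z := by
  ext v
  exact ⟨fun ⟨h1, h2, h3⟩ => ⟨h1, spanij_symm h2, h3⟩,
         fun ⟨h1, h2, h3⟩ => ⟨h1, spanij_symm h2, h3⟩⟩

lemma mnum_symm (i j : I) (z : X) : Mnum C R i j z = Mnum C R j i z := by
  unfold Mnum; rw [pset_symm]

lemma pset_finite (hfin : ∀ y, (R.Δ y).Finite) (i j : I) (z : X) :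
    (Pset C R i j z).Finite := (hfin z).subset fun v hv => hv.1

lemma span_alpha_left (i j : I) : SpanIJ i j (alpha i) := by
  intro k h1 h2; simp [alpha_apply, h1]

lemma span_alpha_right (i j : I) : SpanIJ i j (alpha j) := by
  intro k h1 h2; simp [alpha_apply, h2]

lemma alpha_mem_pset_left (i j : I) (z : X) : (alpha i : I → ℤ) ∈ Pset C R i j z :=
  ⟨alpha_mem C R z i, span_alpha_left i j, alpha_nonneg i⟩

lemma alpha_mem_pset_right (i j : I) (z : X) : (alpha j : I → ℤ) ∈ Pset C R i j z :=
  ⟨alpha_mem C R z j, span_alpha_right i j, alpha_nonneg j⟩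

lemma alpha_ne_alpha {i j : I} (hij : i ≠ j) : (alpha i : I → ℤ) ≠ alpha j := by
  intro h
  have := congrFun h i
  simp [alpha_apply, hij] at this

lemma mnum_ge_two (hfin : ∀ y, (R.Δ y).Finite) {i j : I} (hij : i ≠ j) (z : X) :
    2 ≤ Mnum C R i j z := by
  have hsub : {alpha i, alpha j} ⊆ Pset C R i j z := by
    intro v hv
    rcases hv with h | h
    · rw [h]; exact alpha_mem_pset_left C R i j z
    · rw [Set.mem_singleton_iff.1 h]; exact alpha_mem_pset_right C R i j z
  have h2 : ({alpha i, alpha j} : Set (I → ℤ)).ncard = 2 :=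
    Set.ncard_pair (alpha_ne_alpha hij)
  calc 2 = ({alpha i, alpha j} : Set (I → ℤ)).ncard := h2.symm
    _ ≤ (Pset C R i j z).ncard := Set.ncard_le_ncard hsub (pset_finite C R hfin i j z)

lemma span_decomp {i j : I} (hij : i ≠ j) {v : I → ℤ} (h : SpanIJ i j v) :
    v = v i • alpha i + v j • alpha j := by
  funext k
  by_cases h1 : k = i
  · subst h1; simp [alpha_apply, hij, Ne.symm hij]
  · by_cases h2 : k = j
    · subst h2; simp [alpha_apply, hij, Ne.symm hij, h1]
    · simp [alpha_apply, h1, h2, h k h1 h2]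

lemma s_span {i j : I} (l : I) (hl : l = i ∨ l = j) (z : X) {v : I → ℤ}
    (h : SpanIJ i j v) : SpanIJ i j (C.s z l v) := by
  intro k h1 h2
  have hkl : k ≠ l := by rcases hl with h' | h' <;> (subst h'; assumption)
  rw [s_coord_ne C z l v k hkl]
  exact h k h1 h2

lemma wmap_span {i j : I} (a : List I) : ∀ (z : X) (v : I → ℤ), InIJ i j a →
    SpanIJ i j v → SpanIJ i j (C.wmap z a v) := by
  induction a with
  | nil => intro z v _ h; exact h
  | cons l t ih =>
    intro z v ha h
    rw [wmap_cons]
    exact s_span C l (ha l List.mem_cons_self) z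
      (ih (C.r l z) v (fun m hm => ha m (List.mem_cons_of_mem l hm)) h)

lemma wmap_offspan {i j : I} (a : List I) : ∀ (z : X) (v : I → ℤ) (k : I), InIJ i j a →
    k ≠ i → k ≠ j → C.wmap z a v k = v k := by
  induction a with
  | nil => intro z v k _ _ _; rfl
  | cons l t ih =>
    intro z v k ha h1 h2
    rw [wmap_cons]
    have hkl : k ≠ l := by rcases ha l List.mem_cons_self with h' | h' <;>
      (subst h'; assumption)
    simp only [Function.comp_apply]
    rw [s_coord_ne C z l _ k hkl]
    exact ih (C.r l z) v k (fun m hm => ha m (List.mem_cons_of_mem l hm)) h1 h2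

/-- the set of roots supported on `{i,j}` -/
def SPset (i j : I) (z : X) : Set (I → ℤ) := {v | v ∈ R.Δ z ∧ SpanIJ i j v}

lemma spset_finite (hfin : ∀ y, (R.Δ y).Finite) (i j : I) (z : X) :
    (SPset C R i j z).Finite := (hfin z).subset fun v hv => hv.1

lemma s_spset_image {i j : I} (l : I) (hl : l = i ∨ l = j) (z : X) :
    C.s z l '' SPset C R i j z = SPset C R i j (C.r l z) := by
  ext u
  constructor
  · rintro ⟨v, ⟨hv1, hv2⟩, rfl⟩
    refine ⟨?_, s_span C l hl z hv2⟩
    rw [← R.R3 z l]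
    exact ⟨v, hv1, rfl⟩
  · rintro ⟨hu1, hu2⟩
    refine ⟨C.s z l u, ⟨?_, ?_⟩, s_invol C z l u⟩
    · have h3 := R.R3 (C.r l z) l
      rw [s_ri_eq, C.r_invol] at h3
      rw [← h3]
      exact ⟨u, hu1, rfl⟩
    · exact s_span C l hl z hu2

lemma spset_card (hfin : ∀ y, (R.Δ y).Finite) (i j : I) (z : X) :
    (SPset C R i j z).ncard = 2 * Mnum C R i j z := by
  have hunion : SPset C R i j z = Pset C R i j z ∪ (Neg.neg '' Pset C R i j z) := by
    ext v
    constructor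
    · rintro ⟨hv1, hv2⟩
      by_cases hp : 0 ≤ v
      · exact Or.inl ⟨hv1, hv2, hp⟩
      · refine Or.inr ⟨-v, ⟨R.R1' z v hv1, fun k h1 h2 => by
          simp [hv2 k h1 h2], root_trichot C R hv1 hp⟩, by simp⟩
    · rintro (⟨hv1, hv2, _⟩ | ⟨u, ⟨hu1, hu2, _⟩, rfl⟩)
      · exact ⟨hv1, hv2⟩
      · exact ⟨R.R1' z u hu1, fun k h1 h2 => by simp [hu2 k h1 h2]⟩
  have hdisj : Disjoint (Pset C R i j z) (Neg.neg '' Pset C R i j z) := by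
    rw [Set.disjoint_left]
    rintro v ⟨hv1, _, hv3⟩ ⟨u, ⟨hu1, _, hu3⟩, rfl⟩
    exact root_not_both C R hu1 hu3 (by simpa using hv3)
  rw [hunion, Set.ncard_union_eq hdisj (pset_finite C R hfin i j z)
    ((pset_finite C R hfin i j z).image _),
    Set.ncard_image_of_injective _ neg_injective]
  unfold Mnum; omega

lemma mnum_const (hfin : ∀ y, (R.Δ y).Finite) {i j : I} (l : I) (hl : l = i ∨ l = j)
    (z : X) : Mnum C R i j (C.r l z) = Mnum C R i j z := by
  have h1 := spset_card C R hfin i j z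
  have h2 := spset_card C R hfin i j (C.r l z)
  have h3 : (SPset C R i j (C.r l z)).ncard = (SPset C R i j z).ncard := by
    rw [← s_spset_image C R l hl z, Set.ncard_image_of_injective _ (s_inj C z l)]
  omega

@[simp] lemma altW_zero (i j : I) : altW i j 0 = [] := rfl
@[simp] lemma altW_succ (i j : I) (n : ℕ) : altW i j (n+1) = i :: altW j i n := rfl

lemma altW_length (i j : I) (n : ℕ) : (altW i j n).length = n := by
  induction n generalizing i j with
  | zero => rfl
  | succ n ih => simp [ih]

lemma altW_inij (i j : I) (n : ℕ) : InIJ i j (altW i j n) := by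
  induction n generalizing i j with
  | zero => exact inij_nil i j
  | succ n ih =>
    intro l hl
    rcases List.mem_cons.1 hl with h | h
    · exact Or.inl h
    · exact (ih j i l h).symm

lemma nlet_swap (i j : I) (n : ℕ) : nlet j i n = nlet i j (n+1) := by
  unfold nlet
  rcases Nat.mod_two_eq_zero_or_one n with h | h <;> simp [h, Nat.add_mod]

lemma nlet_mem (i j : I) (n : ℕ) : nlet i j n = i ∨ nlet i j n = j := by
  unfold nlet
  rcases Nat.mod_two_eq_zero_or_one n with h | h <;> simp [h]

lemma nlet_ne {i j : I} (hij : i ≠ j) (n : ℕ) : nlet i j n ≠ nlet i j (n+1) := by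
  unfold nlet
  rcases Nat.mod_two_eq_zero_or_one n with h | h <;>
    simp [h, Nat.add_mod, hij, Ne.symm hij]

lemma altW_concat (i j : I) (n : ℕ) :
    altW i j (n+1) = altW i j n ++ [nlet i j n] := by
  induction n generalizing i j with
  | zero => rfl
  | succ n ih =>
    rw [altW_succ, ih j i, altW_succ, nlet_swap]
    rfl

lemma mnum_src_alt (hfin : ∀ y, (R.Δ y).Finite) {i j : I} (p : ℕ) : ∀ z : X,
    Mnum C R i j (C.src z (altW i j p)) = Mnum C R i j z := by
  induction p generalizing i j with
  | zero => intro z; rfl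
  | succ p ih =>
    intro z
    rw [altW_succ, src_cons]
    have h1 : Mnum C R j i (C.src (C.r i z) (altW j i p)) = Mnum C R j i (C.r i z) :=
      ih (C.r i z)
    rw [mnum_symm, h1, mnum_symm]
    exact mnum_const C R hfin i (Or.inl rfl) z

end RankTwoA
end WeylAux

namespace WeylAux
open CartanScheme

variable {I X : Type*} [Fintype I] [DecidableEq I] [Nonempty I] [Nonempty X]

section RankTwoB
variable (C : CartanScheme I X) (R : RootSystemOf C)

/-- rank-two flipped positive roots -/
def Tset (i j : I) (z : X) (a : List I) : Set (I → ℤ) :=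
  {v | v ∈ Pset C R i j (C.src z a) ∧ 0 ≤ -(C.wmap z a v)}

lemma tset_subset_flip (i j : I) (z : X) (a : List I) :
    Tset C R i j z a ⊆ flip C R z a := fun v hv => ⟨hv.1.1, hv.1.2.2, hv.2⟩

lemma tset_finite (hfin : ∀ y, (R.Δ y).Finite) (i j : I) (z : X) (a : List I) :
    (Tset C R i j z a).Finite := (hfin _).subset fun v hv => hv.1.1

lemma tset_nil (i j : I) (z : X) : Tset C R i j z [] = ∅ := by
  ext v
  simp only [Tset, Set.mem_setOf_eq, Set.mem_empty_iff_false, iff_false]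
  rintro ⟨⟨h1, _, h3⟩, h4⟩
  exact root_not_both C R h1 h3 (by simpa using h4)

lemma tset_step_image {i j : I} (l : I) (hl : l = i ∨ l = j) (z : X) (a : List I) :
    C.s (C.src z a) l '' (Tset C R i j z (a ++ [l]) \ {alpha l})
      = Tset C R i j z a \ {alpha l} := by
  set ya := C.src z a with hya
  have hsrc' : C.src z (a ++ [l]) = C.r l ya := src_concat C z a l
  have hw : C.wmap z (a ++ [l]) = C.wmap z a ∘ C.s ya l := wmap_concat C z a l
  ext u
  constructor
  · rintro ⟨v, ⟨⟨⟨hv1, hvs, hv2⟩, hv3⟩, hvne⟩, rfl⟩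
    rw [hsrc'] at hv1
    have hvne' : v ≠ alpha l := by simpa using hvne
    have hst := step1 C R l hv1 hv2 hvne'
    rw [s_ri_eq, C.r_invol] at hst
    refine ⟨⟨⟨hst.1, s_span C l hl ya hvs, hst.2⟩, ?_⟩, ?_⟩
    · rw [hw] at hv3
      simpa using hv3
    · simp only [Set.mem_singleton_iff]
      intro hcon
      have hvd : v = C.s ya l (alpha l) := by rw [← hcon, s_invol]
      rw [s_alpha_self] at hvd
      have h5 := hv2 l
      rw [hvd] at h5
      simp at h5
  · rintro ⟨⟨⟨hu1, hus, hu2⟩, hu3⟩, hune⟩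
    have hune' : u ≠ alpha l := by simpa using hune
    have hst := step1 C R l hu1 hu2 hune'
    refine ⟨C.s ya l u, ⟨⟨⟨?_, s_span C l hl ya hus, hst.2⟩, ?_⟩, ?_⟩, ?_⟩
    · rw [hsrc']; exact hst.1
    · rw [hw]
      simp only [Function.comp_apply, s_invol]
      exact hu3
    · simp only [Set.mem_singleton_iff]
      intro hcon
      have hud : u = C.s ya l (alpha l) := by rw [← hcon, s_invol]
      rw [s_alpha_self] at hud
      have h5 := hu2 l
      rw [hud] at h5
      simp at h5
    · rw [s_invol]

lemma tset_step_le (hfin : ∀ y, (R.Δ y).Finite) {i j : I} (l : I) (hl : l = i ∨ l = j)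
    (z : X) (a : List I) :
    (Tset C R i j z (a ++ [l])).ncard ≤ (Tset C R i j z a).ncard + 1 := by
  have hT := tset_finite C R hfin i j z a
  have hT' := tset_finite C R hfin i j z (a ++ [l])
  have hcard : (Tset C R i j z (a ++ [l]) \ {alpha l}).ncard
      = (Tset C R i j z a \ {alpha l}).ncard := by
    rw [← tset_step_image C R l hl z a]
    exact (Set.ncard_image_of_injective _ (s_inj C (C.src z a) l)).symm
  have h1 : (Tset C R i j z (a ++ [l])).ncard
      ≤ (Tset C R i j z (a ++ [l]) \ {alpha l}).ncard + 1 := by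
    by_cases hm : alpha l ∈ Tset C R i j z (a ++ [l])
    · rw [Set.ncard_diff_singleton_add_one hm hT']
    · rw [Set.diff_singleton_eq_self hm]; omega
  have h2 : (Tset C R i j z a \ {alpha l}).ncard ≤ (Tset C R i j z a).ncard :=
    Set.ncard_le_ncard Set.diff_subset hT
  omega

/-- if the new simple root stays positive, the count goes up by exactly one -/
lemma tset_step_pos (hfin : ∀ y, (R.Δ y).Finite) {i j : I} (l : I) (hl : l = i ∨ l = j)
    (z : X) (a : List I) (hβ : 0 ≤ C.wmap z a (alpha l)) :
    (Tset C R i j z (a ++ [l])).ncard = (Tset C R i j z a).ncard + 1 := by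
  have hT := tset_finite C R hfin i j z a
  have hT' := tset_finite C R hfin i j z (a ++ [l])
  have hroot : C.wmap z a (alpha l) ∈ R.Δ z := wmap_mem C R (alpha_mem C R _ l)
  have hw : C.wmap z (a ++ [l]) = C.wmap z a ∘ C.s (C.src z a) l := wmap_concat C z a l
  have hcard : (Tset C R i j z (a ++ [l]) \ {alpha l}).ncard
      = (Tset C R i j z a \ {alpha l}).ncard := by
    rw [← tset_step_image C R l hl z a]
    exact (Set.ncard_image_of_injective _ (s_inj C (C.src z a) l)).symm
  have hnm : alpha l ∉ Tset C R i j z a := by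
    rintro ⟨_, h2⟩
    exact root_not_both C R hroot hβ h2
  have hm : alpha l ∈ Tset C R i j z (a ++ [l]) := by
    have halm : (alpha l : I → ℤ) ∈ Pset C R i j (C.src z (a ++ [l])) := by
      rcases hl with h | h
      · rw [h]; exact alpha_mem_pset_left C R i j _
      · rw [h]; exact alpha_mem_pset_right C R i j _
    refine ⟨halm, ?_⟩
    rw [hw]
    simp only [Function.comp_apply, s_alpha_self, wmap_neg, neg_neg]
    exact hβ
  rw [Set.diff_singleton_eq_self hnm] at hcard
  rw [← Set.ncard_diff_singleton_add_one hm hT', hcard]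

/-- Positivity of the roots corresponding to the letters of an alternating word:
the heart of the rank-two analysis. -/
lemma alt_pos (hfin : ∀ y, (R.Δ y).Finite) {i j : I} (hij : i ≠ j) (z : X) :
    ∀ p, (p ≤ Mnum C R i j z → (Tset C R i j z (altW i j p)).ncard = p) ∧
      (p < Mnum C R i j z → 0 ≤ C.wmap z (altW i j p) (alpha (nlet i j p))) := by
  intro p
  induction p with
  | zero =>
    constructor
    · intro _; rw [altW_zero, tset_nil]; simp
    · intro _
      have : nlet i j 0 = i := rfl
      rw [this, altW_zero, wmap_nil]
      exact alpha_nonneg i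
  | succ p ih =>
    obtain ⟨ihc, ihp⟩ := ih
    have hstep : p + 1 ≤ Mnum C R i j z →
        (Tset C R i j z (altW i j (p+1))).ncard = p + 1 := by
      intro hple
      rw [altW_concat]
      rw [tset_step_pos C R hfin (nlet i j p) (nlet_mem i j p) z (altW i j p)
        (ihp (by omega)), ihc (by omega)]
    refine ⟨hstep, ?_⟩
    intro hplt
    by_contra hcon
    -- the new root is negative; then ALL positive span roots at the source flip
    set a := altW i j (p+1) with ha
    have hroot : C.wmap z a (alpha (nlet i j (p+1))) ∈ R.Δ z :=
      wmap_mem C R (alpha_mem C R _ _)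
    have hneg : 0 ≤ -(C.wmap z a (alpha (nlet i j (p+1)))) :=
      root_trichot C R hroot hcon
    -- the other simple root also flips
    have hprev : 0 ≤ -(C.wmap z a (alpha (nlet i j p))) := by
      rw [ha, altW_concat, wmap_concat]
      simp only [Function.comp_apply, s_alpha_self, wmap_neg, neg_neg]
      exact ihp (by omega)
    -- every element of Pset at the source flips
    clear hcon
    have hall : Pset C R i j (C.src z a) ⊆ Tset C R i j z a := by
      intro v hv
      refine ⟨hv, ?_⟩
      obtain ⟨hv1, hvs, hv2⟩ := hv
      have hdec : v = v i • alpha i + v j • alpha j := span_decomp hij hvs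
      have hcomb : C.wmap z a v = v i • C.wmap z a (alpha i) + v j • C.wmap z a (alpha j) := by
        rw [← wmap_lin, ← hdec]
      -- both images are ≤ 0
      have hij_or : (nlet i j (p+1) = i ∧ nlet i j p = j) ∨
          (nlet i j (p+1) = j ∧ nlet i j p = i) := by
        rcases nlet_mem i j (p+1) with h1 | h1 <;> rcases nlet_mem i j p with h2 | h2
        · exfalso; exact nlet_ne hij p (h2.trans h1.symm)
        · exact Or.inl ⟨h1, h2⟩
        · exact Or.inr ⟨h1, h2⟩
        · exfalso; exact nlet_ne hij p (h2.trans h1.symm)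
      have hi_neg : 0 ≤ -(C.wmap z a (alpha i)) := by
        rcases hij_or with ⟨h1, h2⟩ | ⟨h1, h2⟩
        · rw [← h1]; exact hneg
        · rw [← h2]; exact hprev
      have hj_neg : 0 ≤ -(C.wmap z a (alpha j)) := by
        rcases hij_or with ⟨h1, h2⟩ | ⟨h1, h2⟩
        · rw [← h2]; exact hprev
        · rw [← h1]; exact hneg
      rw [hcomb]
      intro k
      have e1 := hi_neg k
      have e2 := hj_neg k
      have e3 := hv2 i
      have e4 := hv2 j
      simp only [Pi.neg_apply, Pi.zero_apply, Pi.add_apply, Pi.smul_apply,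
        smul_eq_mul] at e1 e2 e3 e4 ⊢
      have m1 := mul_nonneg e3 e1
      have m2 := mul_nonneg e4 e2
      linarith
    -- cardinality contradiction
    have hM : Mnum C R i j (C.src z a) = Mnum C R i j z := mnum_src_alt C R hfin (p+1) z
    have hle : Mnum C R i j z ≤ (Tset C R i j z a).ncard := by
      rw [← hM]
      exact Set.ncard_le_ncard hall (tset_finite C R hfin i j z a)
    have hcount : (Tset C R i j z a).ncard = p + 1 := hstep (by omega)
    omega

end RankTwoB
end WeylAux

namespace WeylAux
open CartanScheme

variable {I X : Type*} [Fintype I] [DecidableEq I] [Nonempty I] [Nonempty X]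

section RankTwoC
variable (C : CartanScheme I X) (R : RootSystemOf C)

lemma len_alt (hfin : ∀ y, (R.Δ y).Finite) {i j : I} (hij : i ≠ j) (z : X) (p : ℕ)
    (hp : p ≤ Mnum C R i j z) : C.len z (altW i j p) = p := by
  have h1 : C.len z (altW i j p) ≤ p := by
    have := len_le_length C z (altW i j p)
    rwa [altW_length] at this
  have h2 : p ≤ C.len z (altW i j p) := by
    have hc : (Tset C R i j z (altW i j p)).ncard = p := ((alt_pos C R hfin hij z) p).1 hp
    have hsub : Tset C R i j z (altW i j p) ⊆ flip C R z (altW i j p) :=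
      tset_subset_flip C R i j z (altW i j p)
    have hle : (Tset C R i j z (altW i j p)).ncard ≤ (flip C R z (altW i j p)).ncard :=
      Set.ncard_le_ncard hsub (flip_finite C R hfin z (altW i j p))
    have := flip_le_len C R hfin z (altW i j p)
    omega
  omega

lemma pset_eq_R4set {i j : I} (hij : i ≠ j) (z : X) :
    {v ∈ R.Δ z | ∃ a b : ℕ, v = (a : ℤ) • alpha i + (b : ℤ) • alpha j}
      = Pset C R i j z := by
  ext v
  constructor
  · rintro ⟨hv, a, b, rfl⟩
    refine ⟨hv, ?_, ?_⟩
    · intro k h1 h2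
      simp [alpha_apply, h1, h2]
    · intro k
      by_cases h1 : k = i
      · subst h1; simp [alpha_apply, Ne.symm hij, hij]
      · by_cases h2 : k = j
        · subst h2; simp [alpha_apply, h1, Ne.symm hij]
        · simp [alpha_apply, h1, h2]
  · rintro ⟨hv, hs, hp⟩
    refine ⟨hv, (v i).toNat, (v j).toNat, ?_⟩
    have e1 : ((v i).toNat : ℤ) = v i := Int.toNat_of_nonneg (by simpa using hp i)
    have e2 : ((v j).toNat : ℤ) = v j := Int.toNat_of_nonneg (by simpa using hp j)
    rw [e1, e2]
    exact span_decomp hij hs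

lemma R4_iter (hfin : ∀ y, (R.Δ y).Finite) {i j : I} (hij : i ≠ j) (z : X) :
    (fun y => C.r i (C.r j y))^[Mnum C R i j z] z = z := by
  have hf : {v ∈ R.Δ z | ∃ a b : ℕ, v = (a : ℤ) • alpha i + (b : ℤ) • alpha j}.Finite := by
    rw [pset_eq_R4set C R hij z]; exact pset_finite C R hfin i j z
  have h := R.R4 z i j hij hf
  rwa [pset_eq_R4set C R hij z] at h

lemma iter_cancel {f g : X → X} (hfg : ∀ y, f (g y) = y) :
    ∀ (q : ℕ) (w : X), f^[q] (g^[q] w) = w := by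
  intro q
  induction q with
  | zero => intro w; rfl
  | succ q ih =>
    intro w
    rw [Function.iterate_succ_apply' g, Function.iterate_succ_apply f, hfg, ih]

lemma src_alt_two {i j : I} (z : X) (p : ℕ) :
    C.src z (altW i j (p+2)) = C.src (C.r j (C.r i z)) (altW i j p) := rfl

lemma src_alt_even {i j : I} : ∀ (q : ℕ) (z : X),
    C.src z (altW i j (2*q)) = (fun y => C.r j (C.r i y))^[q] z := by
  intro q
  induction q with
  | zero => intro z; rfl
  | succ q ih =>
    intro z
    have h2q : 2*(q+1) = (2*q) + 2 := by omega
    rw [h2q, src_alt_two, ih, Function.iterate_succ_apply]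

lemma src_alt_odd {i j : I} : ∀ (q : ℕ) (z : X),
    C.src z (altW i j (2*q+1)) = C.r i ((fun y => C.r j (C.r i y))^[q] z) := by
  intro q
  induction q with
  | zero => intro z; rfl
  | succ q ih =>
    intro z
    have h2q : 2*(q+1)+1 = (2*q+1) + 2 := by omega
    rw [h2q, src_alt_two, ih, Function.iterate_succ_apply]

lemma braid_src (hfin : ∀ y, (R.Δ y).Finite) {i j : I} (hij : i ≠ j) (z : X) :
    C.src z (altW i j (Mnum C R i j z)) = C.src z (altW j i (Mnum C R i j z)) := by
  set M := Mnum C R i j z with hM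
  have hR4 : (fun y => C.r j (C.r i y))^[M] z = z := by
    have := R4_iter C R hfin (Ne.symm hij) z
    rwa [← mnum_symm] at this
  have hcanc : ∀ (q : ℕ) (w : X),
      (fun y => C.r i (C.r j y))^[q] ((fun y => C.r j (C.r i y))^[q] w) = w :=
    iter_cancel (f := fun y => C.r i (C.r j y)) (g := fun y => C.r j (C.r i y))
      (fun y => by simp [C.r_invol])
  rcases Nat.even_or_odd M with ⟨q, hq⟩ | ⟨q, hq⟩
  · have hq' : M = 2*q := by omega
    rw [hq', src_alt_even, src_alt_even]
    -- goal : Gij^[q] z = Gji^[q] z  where Gij y = r_j (r_i y) (for word i j), 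
    -- for altW j i : (fun y => C.r i (C.r j y))^[q] z
    rw [hq'] at hR4
    have h2 : (fun y => C.r j (C.r i y))^[q] ((fun y => C.r j (C.r i y))^[q] z) = z := by
      rw [← Function.iterate_add_apply]
      have : q + q = 2*q := by omega
      rw [this]; exact hR4
    calc (fun y => C.r j (C.r i y))^[q] z
        = (fun y => C.r i (C.r j y))^[q]
            ((fun y => C.r j (C.r i y))^[q] ((fun y => C.r j (C.r i y))^[q] z)) := by
          rw [hcanc]
      _ = (fun y => C.r i (C.r j y))^[q] z := by rw [h2]
  · rw [hq, src_alt_odd, src_alt_odd]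
    -- goal : r_i (Gij^[q] z) = r_j (Gji^[q] z)
    rw [hq] at hR4
    have h2 : (fun y => C.r j (C.r i y))^[q]
        ((fun y => C.r j (C.r i y)) ((fun y => C.r j (C.r i y))^[q] z)) = z := by
      have e : 2*q+1 = q + (1 + q) := by omega
      rw [e, Function.iterate_add_apply, Function.iterate_add_apply,
        Function.iterate_one] at hR4
      exact hR4
    have h3 : (fun y => C.r j (C.r i y)) ((fun y => C.r j (C.r i y))^[q] z)
        = (fun y => C.r i (C.r j y))^[q] z := by
      calc (fun y => C.r j (C.r i y)) ((fun y => C.r j (C.r i y))^[q] z)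
          = (fun y => C.r i (C.r j y))^[q]
              ((fun y => C.r j (C.r i y))^[q]
                ((fun y => C.r j (C.r i y)) ((fun y => C.r j (C.r i y))^[q] z))) := by
            rw [hcanc]
        _ = (fun y => C.r i (C.r j y))^[q] z := by rw [h2]
    have h4 := congrArg (C.r j) h3
    simp only [C.r_invol] at h4
    exact h4

end RankTwoC
end WeylAux

namespace WeylAux
open CartanScheme

variable {I X : Type*} [Fintype I] [DecidableEq I] [Nonempty I] [Nonempty X]

section RankTwoD
variable (C : CartanScheme I X) (R : RootSystemOf C)

/-- all positive span-roots at the source are flipped by the alternating word of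
length `M` -/
lemma alt_flip_all (hfin : ∀ y, (R.Δ y).Finite) {i j : I} (hij : i ≠ j) (z : X)
    {v : I → ℤ} (hv : v ∈ Pset C R i j (C.src z (altW i j (Mnum C R i j z)))) :
    0 ≤ -(C.wmap z (altW i j (Mnum C R i j z)) v) := by
  set M := Mnum C R i j z with hM
  have hcard : (Tset C R i j z (altW i j M)).ncard = M :=
    ((alt_pos C R hfin hij z) M).1 le_rfl
  have hsub : Tset C R i j z (altW i j M) ⊆ Pset C R i j (C.src z (altW i j M)) :=
    fun u hu => hu.1
  have hpcard : (Pset C R i j (C.src z (altW i j M))).ncard = M := by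
    have := mnum_src_alt C R hfin (i := i) (j := j) M z
    rw [← hM] at this
    exact this
  have heq : Tset C R i j z (altW i j M) = Pset C R i j (C.src z (altW i j M)) :=
    Set.eq_of_subset_of_ncard_le hsub (by omega) (pset_finite C R hfin i j _)
  rw [← heq] at hv
  exact hv.2

/-- `-wmap` of the length-`M` alternating word maps `Pset` at the source into `Pset z` -/
lemma alt_wmap_pset (hfin : ∀ y, (R.Δ y).Finite) {i j : I} (hij : i ≠ j) (z : X)
    {v : I → ℤ} (hv : v ∈ Pset C R i j (C.src z (altW i j (Mnum C R i j z)))) :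
    -(C.wmap z (altW i j (Mnum C R i j z)) v) ∈ Pset C R i j z := by
  obtain ⟨hv1, hv2, hv3⟩ := hv
  refine ⟨?_, ?_, alt_flip_all C R hfin hij z ⟨hv1, hv2, hv3⟩⟩
  · have := wmap_mem C R (a := altW i j (Mnum C R i j z)) (x := z) hv1
    exact R.R1' z _ this
  · intro k h1 h2
    have := wmap_span C (a := altW i j (Mnum C R i j z)) z v (altW_inij i j _) hv2
    simp [this k h1 h2]

/-- surjectivity onto `-(Pset z)` -/
lemma alt_surj (hfin : ∀ y, (R.Δ y).Finite) {i j : I} (hij : i ≠ j) (z : X)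
    {ν : I → ℤ} (hν : ν ∈ Pset C R i j z) :
    ∃ lam ∈ Pset C R i j (C.src z (altW i j (Mnum C R i j z))),
      C.wmap z (altW i j (Mnum C R i j z)) lam = -ν := by
  set M := Mnum C R i j z with hM
  set b := altW i j M with hb
  obtain ⟨hν1, hν2, hν3⟩ := hν
  have hνneg : -ν ∈ R.Δ z := R.R1' z ν hν1
  obtain ⟨u, hu1, hu2⟩ := wmap_surj_root C R (a := b) (x := z) hνneg
  have hspan : SpanIJ i j u := by
    intro k h1 h2
    have : u = C.wmap (C.src z b) b.reverse (C.wmap z b u) := (wmap_rev_left C b z u).symm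
    rw [this, hu2]
    have hrev := wmap_offspan C (i := i) (j := j) b.reverse (C.src z b) (-ν) k
      (inij_reverse (altW_inij i j M)) h1 h2
    rw [hrev]
    simp [hν2 k h1 h2]
  have hpos : 0 ≤ u := by
    by_contra hcon
    have hneg : 0 ≤ -u := root_trichot C R hu1 hcon
    have humem : -u ∈ Pset C R i j (C.src z b) := by
      refine ⟨R.R1' _ u hu1, ?_, hneg⟩
      intro k h1 h2; simp [hspan k h1 h2]
    have hflip := alt_flip_all C R hfin hij z humem
    rw [wmap_neg, hu2] at hflip
    simp only [neg_neg] at hflip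
    exact root_not_both C R hν1 hν3 hflip
  exact ⟨u, ⟨hu1, hspan, hpos⟩, hu2⟩

/-- 2x2 determinant of the span part -/
def det2 (i j : I) (f : (I → ℤ) → (I → ℤ)) : ℤ :=
  f (alpha i) i * f (alpha j) j - f (alpha i) j * f (alpha j) i

lemma det2_s {i j : I} (hij : i ≠ j) (l : I) (hl : l = i ∨ l = j) (z : X) :
    det2 i j (C.s z l) = -1 := by
  rcases hl with h | h <;> subst h
  · have e1 : C.s z l (alpha l) = -alpha l := s_alpha_self C z l
    unfold det2
    rw [e1]
    rw [s_coord_ne C z l (alpha j) j (Ne.symm hij), s_coord C z l (alpha j) l]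
    simp [alpha_apply, Ne.symm hij, hij]
  · have e1 : C.s z l (alpha l) = -alpha l := s_alpha_self C z l
    unfold det2
    rw [e1]
    rw [s_coord_ne C z l (alpha i) i hij, s_coord C z l (alpha i) l]
    simp [alpha_apply, Ne.symm hij, hij]

lemma det2_comp {i j : I} (hij : i ≠ j) (f g : (I → ℤ) → (I → ℤ))
    (hf : ∀ (p q : ℤ) (u v : I → ℤ), f (p • u + q • v) = p • f u + q • f v)
    (hgi : SpanIJ i j (g (alpha i))) (hgj : SpanIJ i j (g (alpha j))) :
    det2 i j (f ∘ g) = det2 i j f * det2 i j g := by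
  have e1 : g (alpha i) = g (alpha i) i • alpha i + g (alpha i) j • alpha j :=
    span_decomp hij hgi
  have e2 : g (alpha j) = g (alpha j) i • alpha i + g (alpha j) j • alpha j :=
    span_decomp hij hgj
  have c1 : f (g (alpha i)) = g (alpha i) i • f (alpha i) + g (alpha i) j • f (alpha j) := by
    rw [← hf]; rw [← e1]
  have c2 : f (g (alpha j)) = g (alpha j) i • f (alpha i) + g (alpha j) j • f (alpha j) := by
    rw [← hf]; rw [← e2]
  unfold det2
  simp only [Function.comp_apply, c1, c2, Pi.add_apply, Pi.smul_apply, smul_eq_mul]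
  ring

lemma det2_wmap {i j : I} (hij : i ≠ j) (a : List I) : ∀ z : X, InIJ i j a →
    det2 i j (C.wmap z a) = (-1 : ℤ)^(a.length) := by
  induction a with
  | nil =>
    intro z _
    unfold det2
    simp [alpha_apply, hij, Ne.symm hij]
  | cons l t ih =>
    intro z ha
    rw [wmap_cons]
    have hl : l = i ∨ l = j := ha l List.mem_cons_self
    have ht : InIJ i j t := fun m hm => ha m (List.mem_cons_of_mem l hm)
    rw [det2_comp hij _ _ (s_lin C z l)
      (wmap_span C t (C.r l z) (alpha i) ht (span_alpha_left i j))
      (wmap_span C t (C.r l z) (alpha j) ht (span_alpha_right i j)),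
      det2_s C hij l hl z, ih (C.r l z) ht]
    rw [List.length_cons, pow_succ]
    ring

/-- extreme ray argument: a "linear" map fixing the positive span cone either fixes
or swaps the two simple roots -/
lemma ext_ray {i j : I} (hij : i ≠ j) (y : X) (W : (I → ℤ) → (I → ℤ))
    (hlin : ∀ (p q : ℤ) (u v : I → ℤ), W (p • u + q • v) = p • W u + q • W v)
    (hWi : W (alpha i) ∈ Pset C R i j y) (hWj : W (alpha j) ∈ Pset C R i j y)
    (hsurj : ∀ ν ∈ Pset C R i j y, ∃ lam ∈ Pset C R i j y, W lam = ν) :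
    (W (alpha i) = alpha i ∧ W (alpha j) = alpha j) ∨
    (W (alpha i) = alpha j ∧ W (alpha j) = alpha i) := by
  obtain ⟨hWi1, hWi2, hWi3⟩ := hWi
  obtain ⟨hWj1, hWj2, hWj3⟩ := hWj
  obtain ⟨lam, ⟨hl1, hl2, hl3⟩, hlW⟩ := hsurj (alpha i) (alpha_mem_pset_left C R i j y)
  obtain ⟨kap, ⟨hk1, hk2, hk3⟩, hkW⟩ := hsurj (alpha j) (alpha_mem_pset_right C R i j y)
  have hldec : lam = lam i • alpha i + lam j • alpha j := span_decomp hij hl2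
  have hWlam : W lam = lam i • W (alpha i) + lam j • W (alpha j) := by
    rw [← hlin, ← hldec]
  have hkdec : kap = kap i • alpha i + kap j • alpha j := span_decomp hij hk2
  have hWkap : W kap = kap i • W (alpha i) + kap j • W (alpha j) := by
    rw [← hlin, ← hkdec]
  have eq1 : (1:ℤ) = lam i * W (alpha i) i + lam j * W (alpha j) i := by
    have := congrFun (hlW.symm.trans hWlam) i
    simpa [alpha_apply, hij, Ne.symm hij] using this
  have eq2 : (0:ℤ) = lam i * W (alpha i) j + lam j * W (alpha j) j := by
    have := congrFun (hlW.symm.trans hWlam) j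
    simpa [alpha_apply, hij, Ne.symm hij] using this
  have eq3 : (0:ℤ) = kap i * W (alpha i) i + kap j * W (alpha j) i := by
    have := congrFun (hkW.symm.trans hWkap) i
    simpa [alpha_apply, hij, Ne.symm hij] using this
  have eq4 : (1:ℤ) = kap i * W (alpha i) j + kap j * W (alpha j) j := by
    have := congrFun (hkW.symm.trans hWkap) j
    simpa [alpha_apply, hij, Ne.symm hij] using this
  have hdeci : W (alpha i) = W (alpha i) i • alpha i + W (alpha i) j • alpha j :=
    span_decomp hij hWi2
  have hdecj : W (alpha j) = W (alpha j) i • alpha i + W (alpha j) j • alpha j :=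
    span_decomp hij hWj2
  set a := W (alpha i) i with h_a
  set b := W (alpha i) j with h_b
  set a' := W (alpha j) i with h_a'
  set b' := W (alpha j) j with h_b'
  set c := lam i with h_c
  set d := lam j with h_d
  set e := kap i with h_e
  set f := kap j with h_f
  have ha0 : 0 ≤ a := by simpa using hWi3 i
  have hb0 : 0 ≤ b := by simpa using hWi3 j
  have ha'0 : 0 ≤ a' := by simpa using hWj3 i
  have hb'0 : 0 ≤ b' := by simpa using hWj3 j
  have hc0 : 0 ≤ c := by simpa using hl3 i
  have hd0 : 0 ≤ d := by simpa using hl3 j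
  have he0 : 0 ≤ e := by simpa using hk3 i
  have hf0 : 0 ≤ f := by simpa using hk3 j
  by_cases hb : b = 0
  · left
    have h4 : f * b' = 1 := by
      rw [hb, mul_zero] at eq4
      omega
    have hfb' : f = 1 ∧ b' = 1 := by
      rcases Int.mul_eq_one_iff_eq_one_or_neg_one.1 h4 with ⟨h5, h6⟩ | ⟨h5, h6⟩
      · exact ⟨h5, h6⟩
      · omega
    have hea : 0 ≤ e * a := mul_nonneg he0 ha0
    rw [hfb'.1, one_mul] at eq3
    have ha' : a' = 0 := by omega
    have hca : c * a = 1 := by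
      rw [ha', mul_zero] at eq1
      omega
    have hac : a = 1 := by
      rcases Int.mul_eq_one_iff_eq_one_or_neg_one.1 hca with ⟨h5, h6⟩ | ⟨h5, h6⟩
      · exact h6
      · omega
    constructor
    · rw [hdeci, hac, hb]; simp
    · rw [hdecj, ha', hfb'.2]; simp
  · right
    have hcb0 : 0 ≤ c * b := mul_nonneg hc0 hb0
    have hdb'0 : 0 ≤ d * b' := mul_nonneg hd0 hb'0
    have hcb : c * b = 0 := by omega
    have hc : c = 0 := by
      rcases mul_eq_zero.1 hcb with h | h
      · exact h
      · exact absurd h hb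
    have hda' : d * a' = 1 := by
      rw [hc, zero_mul] at eq1
      omega
    have hd1 : d = 1 ∧ a' = 1 := by
      rcases Int.mul_eq_one_iff_eq_one_or_neg_one.1 hda' with ⟨h5, h6⟩ | ⟨h5, h6⟩
      · exact ⟨h5, h6⟩
      · omega
    have hb' : b' = 0 := by
      rw [hc, zero_mul, hd1.1, one_mul] at eq2
      omega
    have heb : e * b = 1 := by
      rw [hb', mul_zero] at eq4
      omega
    have heb1 : e = 1 ∧ b = 1 := by
      rcases Int.mul_eq_one_iff_eq_one_or_neg_one.1 heb with ⟨h5, h6⟩ | ⟨h5, h6⟩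
      · exact ⟨h5, h6⟩
      · omega
    have hfa : a = 0 := by
      rw [heb1.1, one_mul, hd1.2, mul_one] at eq3
      omega
    constructor
    · rw [hdeci, hfa, heb1.2]; simp
    · rw [hdecj, hd1.2, hb']; simp

end RankTwoD
end WeylAux

namespace WeylAux
open CartanScheme

variable {I X : Type*} [Fintype I] [DecidableEq I] [Nonempty I] [Nonempty X]

section Braid
variable (C : CartanScheme I X) (R : RootSystemOf C)

lemma braid (hfin : ∀ y, (R.Δ y).Finite) {i j : I} (hij : i ≠ j) (z : X) :
    WEquiv C z (altW i j (Mnum C R i j z)) (altW j i (Mnum C R i j z)) := by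
  set M := Mnum C R i j z with hM
  have hM2 : Mnum C R j i z = M := (mnum_symm C R i j z).symm
  set b1 := altW i j M with hb1
  set b2 := altW j i M with hb2
  have hsrc : C.src z b1 = C.src z b2 := braid_src C R hfin hij z
  set y := C.src z b1 with hy
  refine ⟨hsrc, ?_⟩
  have hb2' : C.src z b2 = y := hsrc.symm
  have hb1IJ : InIJ i j b1 := altW_inij i j M
  have hb2IJ : InIJ i j b2 := inij_symm (altW_inij j i M)
  set h := b2.reverse ++ b1 with hh
  have hIJ : InIJ i j h := inij_append (inij_reverse hb2IJ) hb1IJ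
  have hsrcrev : C.src y b2.reverse = z := by
    rw [← hb2']; exact src_rev C b2 z
  have hsrch : C.src y h = y := by
    rw [hh, src_append, hsrcrev, ← hy]
  have hwh : ∀ v, C.wmap y h v = C.wmap y b2.reverse (C.wmap z b1 v) := by
    intro v
    rw [hh, wmap_append, hsrcrev]
    rfl
  have hinv2 : ∀ v, C.wmap z b2 (C.wmap y b2.reverse v) = v := by
    intro v
    have := wmap_rev_right C b2 z v
    rwa [hb2'] at this
  have hinv2' : ∀ v, C.wmap y b2.reverse (C.wmap z b2 v) = v := by
    intro v
    have := wmap_rev_left C b2 z v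
    rwa [hb2'] at this
  -- `wmap y h` preserves the positive span cone
  have hWP : ∀ v ∈ Pset C R i j y, C.wmap y h v ∈ Pset C R i j y := by
    intro v hv
    have hv1 : v ∈ Pset C R i j (C.src z (altW i j M)) := by rwa [← hb1, ← hy]
    have hν : -(C.wmap z b1 v) ∈ Pset C R i j z := alt_wmap_pset C R hfin hij z hv1
    have hν' : -(C.wmap z b1 v) ∈ Pset C R j i z := by rwa [← pset_symm]
    obtain ⟨κ, hκ1, hκ2⟩ := alt_surj C R hfin (Ne.symm hij) z hν'
    rw [hM2] at hκ1 hκ2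
    have hκ2' : C.wmap z b2 κ = C.wmap z b1 v := by
      rw [← hb2] at hκ2
      rw [hκ2, neg_neg]
    rw [hwh, ← hκ2', hinv2']
    have hκnew : κ ∈ Pset C R j i (C.src z b2) := hκ1
    rw [hb2'] at hκnew
    rwa [← pset_symm C R i j y] at hκnew
  -- surjectivity of `wmap y h` on the positive span cone
  have hWsurj : ∀ ν ∈ Pset C R i j y, ∃ lam ∈ Pset C R i j y, C.wmap y h lam = ν := by
    intro ν hν
    have hν1 : ν ∈ Pset C R j i (C.src z (altW j i (Mnum C R j i z))) := by
      rw [hM2, ← hb2, hb2']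
      rwa [← pset_symm]
    have hμ : -(C.wmap z (altW j i (Mnum C R j i z)) ν) ∈ Pset C R j i z :=
      alt_wmap_pset C R hfin (Ne.symm hij) z hν1
    have hμ' : -(C.wmap z b2 ν) ∈ Pset C R i j z := by
      rw [← pset_symm] at hμ
      rwa [hM2, ← hb2] at hμ
    obtain ⟨lam, hlam1, hlam2⟩ := alt_surj C R hfin hij z hμ'
    rw [← hb1] at hlam1 hlam2
    rw [← hy] at hlam1
    refine ⟨lam, hlam1, ?_⟩
    rw [hwh, hlam2, neg_neg, hinv2']
  have hlinh : ∀ (p q : ℤ) (u v : I → ℤ),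
      C.wmap y h (p • u + q • v) = p • C.wmap y h u + q • C.wmap y h v :=
    fun p q u v => wmap_lin C h y p q u v
  -- the span part is the identity (swap is excluded by the determinant)
  have hspan_id : C.wmap y h (alpha i) = alpha i ∧ C.wmap y h (alpha j) = alpha j := by
    have hext := ext_ray C R hij y (C.wmap y h) hlinh
      (hWP (alpha i) (alpha_mem_pset_left C R i j y))
      (hWP (alpha j) (alpha_mem_pset_right C R i j y)) hWsurj
    rcases hext with hid | hswap
    · exact hid
    · exfalso
      have hdet : det2 i j (C.wmap y h) = (-1 : ℤ)^(h.length) :=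
        det2_wmap C hij h y hIJ
      have hlen : h.length = M + M := by
        rw [hh, List.length_append, List.length_reverse, hb1, hb2,
          altW_length, altW_length]
      have heven : (-1 : ℤ)^(h.length) = 1 := by
        rw [hlen]
        exact Even.neg_one_pow ⟨M, rfl⟩
      have hswapdet : det2 i j (C.wmap y h) = -1 := by
        unfold det2
        rw [hswap.1, hswap.2]
        simp [alpha_apply, hij, Ne.symm hij]
      rw [hswapdet, heven] at hdet
      norm_num at hdet
  -- foreign coordinates are fixed
  have hfor : ∀ k, k ≠ i → k ≠ j → C.wmap y h (alpha k) = alpha k := by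
    intro k hk1 hk2
    have hrr : ∀ v, C.wmap y h (C.wmap y h.reverse v) = v := by
      intro v
      have := wmap_rev_right C h y v
      rwa [hsrch] at this
    set η := C.wmap y h (alpha k) with hη
    set η' := C.wmap y h.reverse (alpha k) with hη'
    have hηmem : η ∈ R.Δ y := wmap_mem C R (alpha_mem C R _ k)
    have hη'mem : η' ∈ R.Δ y := wmap_mem C R (alpha_mem C R _ k)
    have hoff : ∀ k', k' ≠ i → k' ≠ j → η k' = (alpha k : I → ℤ) k' :=
      fun k' h1 h2 => wmap_offspan C h y (alpha k) k' hIJ h1 h2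
    have hoff' : ∀ k', k' ≠ i → k' ≠ j → η' k' = (alpha k : I → ℤ) k' :=
      fun k' h1 h2 => wmap_offspan C h.reverse y (alpha k) k' (inij_reverse hIJ) h1 h2
    have hηk : η k = 1 := by rw [hoff k hk1 hk2]; simp
    have hη'k : η' k = 1 := by rw [hoff' k hk1 hk2]; simp
    have hηpos : 0 ≤ η := by
      by_contra hcon
      have := root_trichot C R hηmem hcon k
      simp only [Pi.neg_apply, Pi.zero_apply, hηk] at this
      omega
    have hη'pos : 0 ≤ η' := by
      by_contra hcon
      have := root_trichot C R hη'mem hcon k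
      simp only [Pi.neg_apply, Pi.zero_apply, hη'k] at this
      omega
    have hηdec : η = alpha k + (η i • alpha i + η j • alpha j) := by
      funext k'
      by_cases h1 : k' = i
      · subst h1
        simp [alpha_apply, Ne.symm hk1, hij, Ne.symm hij]
      · by_cases h2 : k' = j
        · subst h2
          simp [alpha_apply, Ne.symm hk2, hij, Ne.symm hij, h1]
        · simp [alpha_apply, h1, h2, hoff k' h1 h2]
    have hη'dec : η' = alpha k + (η' i • alpha i + η' j • alpha j) := by
      funext k'
      by_cases h1 : k' = i
      · subst h1
        simp [alpha_apply, Ne.symm hk1, hij, Ne.symm hij]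
      · by_cases h2 : k' = j
        · subst h2
          simp [alpha_apply, Ne.symm hk2, hij, Ne.symm hij, h1]
        · simp [alpha_apply, h1, h2, hoff' k' h1 h2]
    -- α_k = W η' = η + η'_i • A + η'_j • B
    have hkey : alpha k = η + (η' i • C.wmap y h (alpha i) + η' j • C.wmap y h (alpha j)) := by
      have e0 := hrr (alpha k)
      rw [← hη'] at e0
      calc (alpha k : I → ℤ) = C.wmap y h η' := e0.symm
        _ = C.wmap y h (alpha k + (η' i • alpha i + η' j • alpha j)) := by rw [← hη'dec]
        _ = C.wmap y h (alpha k) + C.wmap y h (η' i • alpha i + η' j • alpha j) := by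
            rw [wmap_add]
        _ = η + (η' i • C.wmap y h (alpha i) + η' j • C.wmap y h (alpha j)) := by
            rw [wmap_lin, ← hη]
    have hA := hWP (alpha i) (alpha_mem_pset_left C R i j y)
    have hB := hWP (alpha j) (alpha_mem_pset_right C R i j y)
    have hAi := hA.2.2 i
    have hBi := hB.2.2 i
    have hAj := hA.2.2 j
    have hBj := hB.2.2 j
    have hηi : η i = 0 := by
      have := congrFun hkey i
      simp only [Pi.add_apply, Pi.smul_apply, smul_eq_mul, alpha_apply,
        if_neg (Ne.symm hk1)] at this
      have h5 := hηpos i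
      have h6 := hη'pos i
      have h7 := hη'pos j
      simp only [Pi.zero_apply] at h5 h6 h7 hAi hBi
      nlinarith [mul_nonneg h6 hAi, mul_nonneg h7 hBi]
    have hηj : η j = 0 := by
      have := congrFun hkey j
      simp only [Pi.add_apply, Pi.smul_apply, smul_eq_mul, alpha_apply,
        if_neg (Ne.symm hk2)] at this
      have h5 := hηpos j
      have h6 := hη'pos i
      have h7 := hη'pos j
      simp only [Pi.zero_apply] at h5 h6 h7 hAj hBj
      nlinarith [mul_nonneg h6 hAj, mul_nonneg h7 hBj]
    rw [hηdec, hηi, hηj]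
    simp
  -- hence `wmap y h = id`
  have hid : ∀ v, C.wmap y h v = v := by
    intro v
    conv_lhs => rw [basis_decomp v]
    rw [wmap_finsum]
    have hterm : ∀ k, C.wmap y h (v k • alpha k) = v k • alpha k := by
      intro k
      rw [wmap_smul]
      by_cases h1 : k = i
      · subst h1; rw [hspan_id.1]
      · by_cases h2 : k = j
        · subst h2; rw [hspan_id.2]
        · rw [hfor k h1 h2]
    rw [Finset.sum_congr rfl (fun k _ => hterm k)]
    exact (basis_decomp v).symm
  -- conclude
  funext v
  have e1 := hid v
  rw [hwh] at e1
  have e2 := congrArg (C.wmap z b2) e1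
  rw [hinv2] at e2
  exact e2

end Braid
end WeylAux

namespace WeylAux
open CartanScheme

variable {I X : Type*} [Fintype I] [DecidableEq I] [Nonempty I] [Nonempty X]

section Reduce
variable (C : CartanScheme I X) (R : RootSystemOf C)

lemma nlet_two (i j : I) (n : ℕ) : nlet i j (n+2) = nlet i j n := by
  unfold nlet
  rcases Nat.mod_two_eq_zero_or_one n with h | h <;> simp [Nat.add_mod, h]

/-- helper: unordered pair versions -/
def OrdIJ (i j s s' : I) : Prop := (s = i ∧ s' = j) ∨ (s = j ∧ s' = i)

lemma ordij_symm {i j s s' : I} (h : OrdIJ i j s s') : OrdIJ i j s' s := by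
  rcases h with ⟨h1, h2⟩ | ⟨h1, h2⟩
  · exact Or.inr ⟨h2, h1⟩
  · exact Or.inl ⟨h2, h1⟩

lemma ordij_ne {i j s s' : I} (hij : i ≠ j) (h : OrdIJ i j s s') : s ≠ s' := by
  rcases h with ⟨h1, h2⟩ | ⟨h1, h2⟩ <;> subst h1 <;> subst h2
  · exact hij
  · exact Ne.symm hij

lemma ordij_mem {i j s s' : I} (h : OrdIJ i j s s') (l : I) (hl : l = s ∨ l = s') :
    l = i ∨ l = j := by
  rcases h with ⟨h1, h2⟩ | ⟨h1, h2⟩ <;> subst h1 <;> subst h2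
  · exact hl
  · exact hl.symm

lemma len_alt' (hfin : ∀ y, (R.Δ y).Finite) {i j : I} (hij : i ≠ j) (z : X)
    {s s' : I} (hss : OrdIJ i j s s') (p : ℕ) (hp : p ≤ Mnum C R i j z) :
    C.len z (altW s s' p) = p := by
  rcases hss with ⟨h1, h2⟩ | ⟨h1, h2⟩ <;> subst h1 <;> subst h2
  · exact len_alt C R hfin hij z p hp
  · refine len_alt C R hfin (Ne.symm hij) z p ?_
    rwa [← mnum_symm]

lemma braid' (hfin : ∀ y, (R.Δ y).Finite) {i j : I} (hij : i ≠ j) (z : X)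
    {s s' : I} (hss : OrdIJ i j s s') :
    WEquiv C z (altW s s' (Mnum C R i j z)) (altW s' s (Mnum C R i j z)) := by
  rcases hss with ⟨h1, h2⟩ | ⟨h1, h2⟩ <;> subst h1 <;> subst h2
  · exact braid C R hfin hij z
  · have := braid C R hfin (Ne.symm hij) z
    rwa [← mnum_symm] at this

lemma alt_pos' (hfin : ∀ y, (R.Δ y).Finite) {i j : I} (hij : i ≠ j) (z : X)
    {s s' : I} (hss : OrdIJ i j s s') (p : ℕ) (hp : p < Mnum C R i j z) :
    0 ≤ C.wmap z (altW s s' p) (alpha (nlet s s' p)) := by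
  rcases hss with ⟨h1, h2⟩ | ⟨h1, h2⟩ <;> subst h1 <;> subst h2
  · exact ((alt_pos C R hfin hij z) p).2 hp
  · refine ((alt_pos C R hfin (Ne.symm hij) z) p).2 ?_
    rwa [← mnum_symm]

lemma inij_alt' {i j s s' : I} (hss : OrdIJ i j s s') (p : ℕ) :
    InIJ i j (altW s s' p) := by
  intro l hl
  exact ordij_mem hss l (altW_inij s s' p l hl)

lemma alt_reduce (hfin : ∀ y, (R.Δ y).Finite) {i j : I} (hij : i ≠ j) :
    ∀ (a : List I) (z : X), InIJ i j a →
    ∃ (p : ℕ) (s s' : I), OrdIJ i j s s' ∧ p ≤ Mnum C R i j z ∧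
      WEquiv C z a (altW s s' p) := by
  intro a
  induction a with
  | nil =>
    intro z _
    exact ⟨0, i, j, Or.inl ⟨rfl, rfl⟩, by omega, WEquiv.refl C z []⟩
  | cons l t ih =>
    intro z ha
    have hl : l = i ∨ l = j := ha l List.mem_cons_self
    have ht : InIJ i j t := fun m hm => ha m (List.mem_cons_of_mem l hm)
    obtain ⟨p, s, s', hss, hpM, he⟩ := ih (C.r l z) ht
    have hpMz : p ≤ Mnum C R i j z := by
      rwa [mnum_const C R hfin l hl z] at hpM
    have hcons : WEquiv C z (l :: t) (l :: altW s s' p) := by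
      have := wequiv_append_left C [l] (x := z) (a := t) (b := altW s s' p)
        (by simpa using he)
      simpa using this
    rcases Nat.eq_zero_or_pos p with hp0 | hppos
    · -- a ≡ [l]
      subst hp0
      have h1M : 1 ≤ Mnum C R i j z := by
        have := mnum_ge_two C R hfin hij z
        omega
      rcases hl with hli | hlj
      · refine ⟨1, i, j, Or.inl ⟨rfl, rfl⟩, h1M, ?_⟩
        subst hli
        simpa using hcons
      · refine ⟨1, j, i, Or.inr ⟨rfl, rfl⟩, h1M, ?_⟩
        subst hlj
        simpa using hcons
    · obtain ⟨p', rfl⟩ : ∃ p', p = p' + 1 := ⟨p - 1, by omega⟩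
      by_cases hls : l = s
      · -- cancellation of the two leading letters
        subst hls
        have hcanc : WEquiv C z (l :: altW l s' (p'+1)) (altW s' l p') := by
          have h0 : WEquiv C z ([] ++ l :: l :: altW s' l p') ([] ++ altW s' l p') :=
            wequiv_cancel_pair C z [] (altW s' l p') l
          simpa using h0
        exact ⟨p', s', l, ordij_symm hss, by omega, wequiv_trans hcons hcanc⟩
      · -- l = s' : the word grows
        have hls' : l = s' := by
          rcases hss with ⟨h1, h2⟩ | ⟨h1, h2⟩ <;> subst h1 <;> subst h2 <;>
            rcases hl with h | h <;> first | (exfalso; exact hls h) | exact h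
        subst hls'
        have hgrow : (l :: altW s l (p'+1)) = altW l s (p'+2) := rfl
        rw [hgrow] at hcons
        by_cases hpM2 : p' + 2 ≤ Mnum C R i j z
        · exact ⟨p'+2, l, s, ordij_symm hss, hpM2, hcons⟩
        · -- p' + 1 = M ; use the braid relation
          set M := Mnum C R i j z with hMdef
          have hpM' : p' + 1 = M := by omega
          have hbr : WEquiv C z (altW l s M) (altW s l M) :=
            braid' C R hfin hij z (ordij_symm hss)
          have e1 : altW l s (p'+2) = altW l s M ++ [nlet l s M] := by
            rw [← hpM']
            exact altW_concat l s (p'+1)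
          have e2 : WEquiv C z (altW l s M ++ [nlet l s M])
              (altW s l M ++ [nlet l s M]) :=
            wequiv_append_right C [nlet l s M] hbr
          -- last letter of altW s l M equals nlet l s M
          have e3 : altW s l M = altW s l (M-1) ++ [nlet s l (M-1)] := by
            have h3 : M - 1 + 1 = M := by omega
            rw [← h3]
            exact altW_concat s l (M-1)
          have e4 : nlet l s M = nlet s l (M-1) := by
            have h1 : nlet l s M = nlet s l (M+1) := nlet_swap s l M
            have h2 : nlet s l (M+1) = nlet s l (M-1) := by
              have h4 : M + 1 = (M - 1) + 2 := by omega
              rw [h4, nlet_two]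
            rw [h1, h2]
          have e5 : WEquiv C z (altW s l M ++ [nlet l s M]) (altW s l (M-1)) := by
            rw [e3, e4]
            have h0 : WEquiv C z (altW s l (M-1) ++
                nlet s l (M-1) :: nlet s l (M-1) :: [])
                (altW s l (M-1) ++ []) :=
              wequiv_cancel_pair C z (altW s l (M-1)) [] (nlet s l (M-1))
            simpa using h0
          refine ⟨M - 1, s, l, hss, by omega, ?_⟩
          rw [e1] at hcons
          exact wequiv_trans hcons (wequiv_trans e2 e5)

/-- The rank-two key lemma: if a rank-two morphism makes `α_i` negative, then
appending `i` decreases the length. -/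
lemma rank2key (hfin : ∀ y, (R.Δ y).Finite) {i j : I} (hij : i ≠ j) (z : X)
    (v : List I) (hv : InIJ i j v)
    (hneg : 0 ≤ -(C.wmap z v (alpha i))) :
    C.len z (v ++ [i]) < C.len z v := by
  obtain ⟨p, s, s', hss, hpM, he⟩ := alt_reduce C R hfin hij v z hv
  have hlenv : C.len z v = p := by
    rw [len_congr C he]
    exact len_alt' C R hfin hij z hss p hpM
  rcases Nat.eq_zero_or_pos p with hp0 | hppos
  · -- impossible : wmap v = id
    exfalso
    subst hp0
    have hid : C.wmap z v = id := he.2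
    rw [hid] at hneg
    have := hneg i
    simp [alpha_apply] at this
  · obtain ⟨p', rfl⟩ : ∃ p', p = p' + 1 := ⟨p - 1, by omega⟩
    have hvi : WEquiv C z (v ++ [i]) (altW s s' (p'+1) ++ [i]) :=
      wequiv_append_right C [i] he
    have hconcat : altW s s' (p'+1) = altW s s' p' ++ [nlet s s' p'] :=
      altW_concat s s' p'
    by_cases hei : nlet s s' p' = i
    · -- cancellation
      have hcanc : WEquiv C z (altW s s' (p'+1) ++ [i]) (altW s s' p') := by
        rw [hconcat, hei]
        have h0 : WEquiv C z (altW s s' p' ++ i :: i :: []) (altW s s' p' ++ []) :=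
          wequiv_cancel_pair C z (altW s s' p') [] i
        simpa using h0
      have : C.len z (v ++ [i]) ≤ p' := by
        have h1 := len_congr C (wequiv_trans hvi hcanc)
        rw [h1]
        have := len_le_length C z (altW s s' p')
        rwa [altW_length] at this
      omega
    · -- the next letter is i
      have hpj : nlet s s' p' = j := by
        rcases ordij_mem hss _ (nlet_mem s s' p') with h | h
        · exact absurd h hei
        · exact h
      have hnext : nlet s s' (p'+1) = i := by
        rcases ordij_mem hss _ (nlet_mem s s' (p'+1)) with h | h
        · exact h
        · exfalso
          exact (nlet_ne (ordij_ne hij hss) p') (by rw [hpj, h])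
      by_cases hpM2 : p' + 1 < Mnum C R i j z
      · -- contradiction with positivity
        exfalso
        have hpos := alt_pos' C R hfin hij z hss (p'+1) hpM2
        rw [hnext] at hpos
        have hroot : C.wmap z v (alpha i) ∈ R.Δ z :=
          wmap_mem C R (alpha_mem C R _ i)
        rw [he.2] at hroot hneg
        exact root_not_both C R hroot hpos hneg
      · -- p' + 1 = M : use the braid
        set M := Mnum C R i j z with hMdef
        have hpM' : p' + 1 = M := by omega
        have hbr : WEquiv C z (altW s s' M) (altW s' s M) := braid' C R hfin hij z hss
        -- last letter of altW s' s M is  nlet s' s (M-1) = nlet s s' M = nlet s s' (p'+1) = i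
        have e4 : nlet s' s (M-1) = i := by
          have h1 : nlet s' s (M-1) = nlet s s' M := by
            have h2 := nlet_swap s s' (M-1)
            have h3 : M - 1 + 1 = M := by omega
            rw [h2, h3]
          rw [h1, ← hpM', hnext]
        have e3 : altW s' s M = altW s' s (M-1) ++ [nlet s' s (M-1)] := by
          have h3 : M - 1 + 1 = M := by omega
          rw [← h3]
          exact altW_concat s' s (M-1)
        have hch : WEquiv C z (v ++ [i]) (altW s' s (M-1)) := by
          have c1 : WEquiv C z (v ++ [i]) (altW s s' M ++ [i]) := by
            rw [← hpM']; exact hvi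
          have c2 : WEquiv C z (altW s s' M ++ [i]) (altW s' s M ++ [i]) :=
            wequiv_append_right C [i] hbr
          have c3 : WEquiv C z (altW s' s M ++ [i]) (altW s' s (M-1)) := by
            rw [e3, e4]
            have h0 : WEquiv C z (altW s' s (M-1) ++ i :: i :: [])
                (altW s' s (M-1) ++ []) :=
              wequiv_cancel_pair C z (altW s' s (M-1)) [] i
            simpa using h0
          exact wequiv_trans c1 (wequiv_trans c2 c3)
        have : C.len z (v ++ [i]) ≤ M - 1 := by
          rw [len_congr C hch]
          have := len_le_length C z (altW s' s (M-1))
          rwa [altW_length] at this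
        omega

end Reduce
end WeylAux

namespace WeylAux
open CartanScheme

variable {I X : Type*} [Fintype I] [DecidableEq I] [Nonempty I] [Nonempty X]

section Key
variable (C : CartanScheme I X) (R : RootSystemOf C)

lemma len_nil (x : X) : C.len x [] = 0 :=
  Nat.le_antisymm (len_le_length C x []) (Nat.zero_le _)

lemma s_neg (z : X) (l : I) (v : I → ℤ) : C.s z l (-v) = -(C.s z l v) := by
  have := s_lin C z l (-1) 0 v 0
  simpa using this

/-- **Key theorem** : if appending `i` increases the length, then the image of `α_i`
is a positive root. -/
lemma key (hfin : ∀ y, (R.Δ y).Finite) :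
    ∀ (n : ℕ) (x : X) (w : List I) (i : I), C.len x w = n →
    C.len x w < C.len x (w ++ [i]) →
    C.wmap x w (alpha i) ∈ R.Δ x ∧ 0 ≤ C.wmap x w (alpha i) := by
  intro n
  induction n using Nat.strong_induction_on with
  | _ n IH =>
  intro x w i hn hlt
  rcases Nat.eq_zero_or_pos n with hn0 | hnpos
  · -- length 0 : the morphism is the identity
    subst hn0
    obtain ⟨ρ, hρl, hρe⟩ := len_exists_rep C x w
    rw [hn] at hρl
    have hρnil : ρ = [] := List.length_eq_zero_iff.1 hρl
    subst hρnil
    rw [← hρe.2]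
    exact ⟨alpha_mem C R x i, alpha_nonneg i⟩
  · obtain ⟨ρ, hρl, hρe⟩ := len_exists_rep C x w
    rw [hn] at hρl
    have hρne : ρ ≠ [] := by
      intro hcon; rw [hcon] at hρl; simp at hρl; omega
    set j := ρ.getLast hρne with hj
    set p0 := ρ.dropLast with hp0
    have hρdec : ρ = p0 ++ [j] := (List.dropLast_append_getLast hρne).symm
    have hp0len : p0.length = n - 1 := by
      rw [hp0, List.length_dropLast, hρl]
    -- j ≠ i
    have hji : j ≠ i := by
      intro hcon
      have h1 : WEquiv C x (ρ ++ [i]) (w ++ [i]) := wequiv_append_right C [i] hρe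
      have h2 : WEquiv C x (ρ ++ [i]) p0 := by
        rw [hρdec, hcon]
        have h0 : WEquiv C x (p0 ++ i :: i :: []) (p0 ++ []) :=
          wequiv_cancel_pair C x p0 [] i
        simpa using h0
      have h3 : C.len x (w ++ [i]) ≤ n - 1 := by
        rw [← len_congr C h1, len_congr C h2]
        have := len_le_length C x p0
        omega
      omega
    have hij : i ≠ j := Ne.symm hji
    -- the set of possible rank-two tails
    set B : Set ℕ := {q | ∃ v : List I, (InIJ i j v ∧
      C.len x (w ++ v.reverse) + C.len (C.src x (w ++ v.reverse)) v = n) ∧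
      C.len (C.src x (w ++ v.reverse)) v = q} with hB
    have hBne : B.Nonempty := by
      refine ⟨0, [], ⟨inij_nil i j, ?_⟩, ?_⟩
      · simp [len_nil, hn]
      · simp [len_nil]
    have hBbdd : BddAbove B := by
      refine ⟨n, ?_⟩
      rintro q ⟨v, ⟨_, heq⟩, hq⟩
      omega
    set q0 := sSup B with hq0
    obtain ⟨v0, ⟨hv0IJ, hv0eq⟩, hv0len⟩ := Nat.sSup_mem hBne hBbdd
    -- `[j] ∈ B` with value 1, so q0 ≥ 1
    have hwj : C.len x (w ++ [j]) = n - 1 := by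
      have h1 : WEquiv C x (ρ ++ [j]) (w ++ [j]) := wequiv_append_right C [j] hρe
      have h2 : WEquiv C x (ρ ++ [j]) p0 := by
        rw [hρdec]
        have h0 : WEquiv C x (p0 ++ j :: j :: []) (p0 ++ []) :=
          wequiv_cancel_pair C x p0 [] j
        simpa using h0
      have h3 : C.len x (w ++ [j]) ≤ n - 1 := by
        rw [← len_congr C h1, len_congr C h2]
        have := len_le_length C x p0
        omega
      have h4 := len_le_append C x w [j]
      simp only [List.length_singleton] at h4
      omega
    have h1B : 1 ∈ B := by
      refine ⟨[j], ⟨fun l hl => by simp at hl; exact Or.inr hl, ?_⟩, ?_⟩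
      · have hl1 : C.len (C.src x (w ++ [j])) [j] = 1 := by
          have hpar := len_parity C R hfin (C.src x (w ++ [j])) [j]
          have hle := len_le_length C (C.src x (w ++ [j])) [j]
          simp only [List.length_singleton] at hpar hle
          omega
        simp only [List.reverse_singleton]
        rw [hwj, hl1]
        omega
      · simp only [List.reverse_singleton]
        have hpar := len_parity C R hfin (C.src x (w ++ [j])) [j]
        have hle := len_le_length C (C.src x (w ++ [j])) [j]
        simp only [List.length_singleton] at hpar hle
        omega
    have hq0ge1 : 1 ≤ q0 := le_csSup hBbdd h1B
    -- notation
    set u := w ++ v0.reverse with hu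
    set z0 := C.src x u with hz0
    rw [← hq0] at hv0len
    have hlu : C.len x u = n - q0 := by omega
    have hq0n : q0 ≤ n := by omega
    have hequvw : WEquiv C x (u ++ v0) w := wequiv_rev_cancel C x w v0
    -- (c1) : appending i or j to u increases length
    have hc1 : ∀ l, (l = i ∨ l = j) → C.len x u < C.len x (u ++ [l]) := by
      intro l hl
      by_contra hcon
      push_neg at hcon
      have hne := len_concat_ne C R hfin x u l
      have hlow := len_le_append C x u [l]
      simp only [List.length_singleton] at hlow
      have hexact : C.len x (u ++ [l]) = C.len x u - 1 ∧ 1 ≤ C.len x u := by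
        omega
      -- build the longer tail  l :: v0
      have hrev : (l :: v0).reverse = v0.reverse ++ [l] := by simp
      have hjoin : w ++ (l :: v0).reverse = u ++ [l] := by
        rw [hrev, hu, List.append_assoc]
      have hequiv2 : WEquiv C x ((u ++ [l]) ++ (l :: v0)) w := by
        have e1 : (u ++ [l]) ++ (l :: v0) = u ++ (l :: l :: v0) := by
          simp [List.append_assoc]
        rw [e1]
        exact wequiv_trans (wequiv_cancel_pair C x u v0 l) hequvw
      have htri : n ≤ C.len x (u ++ [l]) + C.len (C.src x (u ++ [l])) (l :: v0) := by
        have := len_append_le C x (u ++ [l]) (l :: v0)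
        rw [len_congr C hequiv2] at this
        omega
      have hup : C.len (C.src x (u ++ [l])) (l :: v0) ≤ 1 + q0 := by
        have hsrcl : C.r l (C.src x (u ++ [l])) = z0 := by
          rw [src_concat, C.r_invol]
        have := len_cons_le C (C.src x (u ++ [l])) l v0
        rw [hsrcl] at this
        omega
      have hBmem : (q0 + 1) ∈ B := by
        refine ⟨l :: v0, ⟨?_, ?_⟩, ?_⟩
        · intro m hm
          rcases List.mem_cons.1 hm with h | h
          · rw [h]; exact hl
          · exact hv0IJ m h
        · rw [hjoin]
          omega
        · rw [hjoin]
          omega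
      have := le_csSup hBbdd hBmem
      omega
    -- apply the induction hypothesis to u
    have hlun : n - q0 < n := by omega
    have hui := IH (n - q0) hlun x u i hlu (hc1 i (Or.inl rfl))
    have huj := IH (n - q0) hlun x u j hlu (hc1 j (Or.inr rfl))
    -- rank-two analysis of v0
    set μ := C.wmap z0 v0 (alpha i) with hμ
    have hμspan : SpanIJ i j μ := wmap_span C v0 z0 (alpha i) hv0IJ (span_alpha_left i j)
    have hμroot : μ ∈ R.Δ z0 := wmap_mem C R (alpha_mem C R _ i)
    have hμpos : 0 ≤ μ := by
      by_contra hcon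
      have hμneg : 0 ≤ -μ := root_trichot C R hμroot hcon
      have hkey := rank2key C R hfin hij z0 v0 hv0IJ hμneg
      rw [hv0len] at hkey
      -- then len x (w ++ [i]) < n, contradiction
      have hwi : WEquiv C x (w ++ [i]) (u ++ (v0 ++ [i])) := by
        have e1 : (u ++ v0) ++ [i] = u ++ (v0 ++ [i]) := by simp [List.append_assoc]
        have := wequiv_append_right C [i] hequvw
        rw [e1] at this
        exact wequiv_symm this
      have : C.len x (w ++ [i]) ≤ C.len x u + C.len z0 (v0 ++ [i]) := by
        rw [len_congr C hwi]
        exact len_append_le C x u (v0 ++ [i])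
      omega
    -- conclude
    have hweq : C.wmap x w (alpha i) = C.wmap x u μ := by
      rw [← hequvw.2, wmap_append, hμ, ← hz0]
      rfl
    have hμdec : μ = μ i • alpha i + μ j • alpha j := span_decomp hij hμspan
    have hcomb : C.wmap x u μ = μ i • C.wmap x u (alpha i) + μ j • C.wmap x u (alpha j) := by
      rw [← wmap_lin, ← hμdec]
    constructor
    · exact wmap_mem C R (alpha_mem C R _ i)
    · rw [hweq, hcomb]
      intro k
      have e1 := hui.2 k
      have e2 := huj.2 k
      have e3 := hμpos i
      have e4 := hμpos j
      simp only [Pi.zero_apply, Pi.add_apply, Pi.smul_apply, smul_eq_mul] at e1 e2 e3 e4 ⊢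
      have m1 := mul_nonneg e3 e1
      have m2 := mul_nonneg e4 e2
      omega

/-- the companion : if appending `i` decreases the length, `α_i` is sent to a
negative root -/
lemma key_neg (hfin : ∀ y, (R.Δ y).Finite) (x : X) (w : List I) (i : I)
    (hlt : C.len x (w ++ [i]) < C.len x w) :
    0 ≤ -(C.wmap x w (alpha i)) := by
  have hcanc : WEquiv C x ((w ++ [i]) ++ [i]) w := by
    have h0 : WEquiv C x (w ++ i :: i :: []) (w ++ []) :=
      wequiv_cancel_pair C x w [] i
    simpa [List.append_assoc] using h0
  have hlt2 : C.len x (w ++ [i]) < C.len x ((w ++ [i]) ++ [i]) := by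
    rw [len_congr C hcanc]
    exact hlt
  have hk := key C R hfin (C.len x (w ++ [i])) x (w ++ [i]) i rfl hlt2
  have he : C.wmap x (w ++ [i]) (alpha i) = -(C.wmap x w (alpha i)) := by
    rw [wmap_concat]
    simp only [Function.comp_apply, s_alpha_self, wmap_neg]
  rw [he] at hk
  exact hk.2

end Key
end WeylAux

namespace WeylAux
open CartanScheme

variable {I X : Type*} [Fintype I] [DecidableEq I] [Nonempty I] [Nonempty X]

section Betas
variable (C : CartanScheme I X) (R : RootSystemOf C)

lemma betas_struct : ∀ (w : List I) (x : X) (b : I → ℤ), b ∈ C.betas x w →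
    ∃ (p : List I) (l : I) (t : List I), w = p ++ l :: t ∧ b = C.wmap x p (alpha l) := by
  intro w
  induction w with
  | nil => intro x b hb; simp [CartanScheme.betas] at hb
  | cons i t ih =>
    intro x b hb
    have hbet : C.betas x (i :: t)
        = alpha i :: ((C.betas (C.r i x) t).map (C.s (C.r i x) i)) := rfl
    rw [hbet] at hb
    rcases List.mem_cons.1 hb with h | h
    · exact ⟨[], i, t, rfl, h⟩
    · obtain ⟨b', hb', rfl⟩ := List.mem_map.1 h
      obtain ⟨p', l, t', ht, hb'eq⟩ := ih (C.r i x) b' hb'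
      refine ⟨i :: p', l, t', by rw [ht]; rfl, ?_⟩
      rw [hb'eq]
      rfl

lemma mem_betas_of_flip : ∀ (w : List I) (x : X) (lam : I → ℤ),
    lam ∈ R.Δ (C.src x w) → 0 ≤ lam → 0 ≤ -(C.wmap x w lam) →
    -(C.wmap x w lam) ∈ {b | b ∈ C.betas x w} := by
  intro w
  induction w with
  | nil =>
    intro x lam h1 h2 h3
    exact absurd (root_not_both C R h1 h2 (by simpa using h3)) (by simp)
  | cons i t ih =>
    intro x lam h1 h2 h3
    have hsrc : C.src x (i :: t) = C.src (C.r i x) t := rfl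
    rw [hsrc] at h1
    set μ := C.wmap (C.r i x) t lam with hμ
    have hμmem : μ ∈ R.Δ (C.r i x) := wmap_mem C R h1
    have hwc : C.wmap x (i :: t) lam = C.s (C.r i x) i μ := rfl
    have hbet : C.betas x (i :: t)
        = alpha i :: ((C.betas (C.r i x) t).map (C.s (C.r i x) i)) := rfl
    by_cases hμpos : 0 ≤ μ
    · -- μ must be α_i
      have hμa : μ = alpha i := by
        apply step1_rev C R i hμmem hμpos
        rw [← hwc]
        exact h3
      have : -(C.wmap x (i :: t) lam) = alpha i := by
        rw [hwc, hμa, s_alpha_self, neg_neg]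
      rw [this, hbet]
      exact List.mem_cons_self
    · have hμneg : 0 ≤ -μ := root_trichot C R hμmem hμpos
      have hneg2 : 0 ≤ -(C.wmap (C.r i x) t lam) := hμneg
      have hmem := ih (C.r i x) lam h1 h2 hneg2
      have : -(C.wmap x (i :: t) lam) = C.s (C.r i x) i (-μ) := by
        rw [hwc, s_neg]
      rw [this, hbet]
      simp only [Set.mem_setOf_eq, List.mem_cons]
      right
      exact List.mem_map.2 ⟨-μ, hmem, rfl⟩

end Betas
end WeylAux

open WeylAux CartanScheme

theorem rootSystem_longest_betas_eq_posRoots'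
    {I X : Type*} [Fintype I] [DecidableEq I] [Nonempty I] [Nonempty X]
    (C : CartanScheme I X) (R : RootSystemOf C)
    (hfin : ∀ y, (R.Δ y).Finite)
    (x : X) (w : List I)
    (hred : C.len x w = w.length)
    (hlongest : ∀ w' : List I, C.len x w' ≤ C.len x w) :
    {b | b ∈ C.betas x w} = R.pos x := by
  have hposdef : ∀ v, v ∈ R.pos x ↔ v ∈ R.Δ x ∧ 0 ≤ v := by
    intro v; rfl
  ext b
  simp only [Set.mem_setOf_eq]
  constructor
  · -- every beta is a positive root
    intro hb
    obtain ⟨p, l, t, hw, hbeq⟩ := betas_struct C w x b hb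
    -- prefixes of a reduced word are reduced
    have hlenp : C.len x p = p.length := by
      have h1 : C.len x w ≤ C.len x p + (l :: t).length := by
        rw [hw]
        exact len_append_length_le C x p (l :: t)
      have h2 := len_le_length C x p
      have h3 : w.length = p.length + (l :: t).length := by
        rw [hw, List.length_append]
      omega
    have hlenpl : C.len x p < C.len x (p ++ [l]) := by
      have h1 : C.len x w ≤ C.len x (p ++ [l]) + t.length := by
        have hw2 : w = (p ++ [l]) ++ t := by
          rw [hw]; simp
        rw [hw2]
        exact len_append_length_le C x (p ++ [l]) t
      have h3 : w.length = p.length + t.length + 1 := by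
        rw [hw, List.length_append, List.length_cons]
        omega
      omega
    have hk := key C R hfin (C.len x p) x p l rfl hlenpl
    rw [hposdef, hbeq]
    exact hk
  · -- every positive root is a beta
    intro hb
    rw [hposdef] at hb
    obtain ⟨hbΔ, hbpos⟩ := hb
    set y := C.src x w with hy
    -- every simple root at the source is flipped
    have hflip : ∀ l : I, 0 ≤ -(C.wmap x w (alpha l)) := by
      intro l
      apply key_neg C R hfin
      have h1 := hlongest (w ++ [l])
      have h2 := len_concat_ne C R hfin x w l
      omega
    -- every nonneg vector at the source is sent to a nonpositive vector
    have hflipall : ∀ ν : I → ℤ, 0 ≤ ν → 0 ≤ -(C.wmap x w ν) := by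
      intro ν hν
      have hsum : C.wmap x w ν = ∑ k, ν k • C.wmap x w (alpha k) := by
        conv_lhs => rw [basis_decomp ν, wmap_finsum]
        refine Finset.sum_congr rfl fun k _ => ?_
        rw [wmap_smul]
      rw [hsum]
      intro k'
      rw [Pi.neg_apply, Finset.sum_apply]
      simp only [Pi.zero_apply, Pi.smul_apply, smul_eq_mul]
      rw [neg_nonneg]
      apply Finset.sum_nonpos
      intro k _
      have h1 := hν k
      have h2 := hflip k k'
      simp only [Pi.zero_apply, Pi.neg_apply] at h1 h2
      exact mul_nonpos_of_nonneg_of_nonpos h1 (by omega)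
    -- find the positive preimage of -b
    have hnb : -b ∈ R.Δ x := R.R1' x b hbΔ
    obtain ⟨μ, hμmem, hμeq⟩ := wmap_surj_root C R (a := w) (x := x) hnb
    have hμpos : 0 ≤ μ := by
      by_contra hcon
      have hμneg : 0 ≤ -μ := root_trichot C R hμmem hcon
      have := hflipall (-μ) hμneg
      rw [wmap_neg, hμeq] at this
      simp only [neg_neg] at this
      exact root_not_both C R hbΔ hbpos this
    have hbulk := mem_betas_of_flip C R w x μ hμmem hμpos (by rw [hμeq, neg_neg]; exact hbpos)
    rw [hμeq, neg_neg] at hbulk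
    exact hbulk



/-- Let `R` be a finite root system of type a Cartan scheme `C` with
connected Weyl groupoid, `x` an object, and `w` a longest element of the set of morphisms
with target `x`, with reduced expression `w = s_{i_1} ⋯ s_{i_m}`, `m = ℓ(w)`.  Then
`{β_k = id_x s_{i_1} ⋯ s_{i_{k-1}} (α_{i_k}) | 1 ≤ k ≤ m}` equals the set `Δ^x_+` of
positive roots at `x`. -/
theorem rootSystem_longest_betas_eq_posRoots
    {I X : Type*} [Fintype I] [DecidableEq I] [Nonempty I] [Nonempty X]
    (C : CartanScheme I X) (R : RootSystemOf C)
    (hfin : ∀ y, (R.Δ y).Finite)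
    (hconn : ∀ y z : X, ∃ w : List I, C.src y w = z)
    (x : X) (w : List I)
    (hred : C.len x w = w.length)
    (hlongest : ∀ w' : List I, C.len x w' ≤ C.len x w) :
    {b | b ∈ C.betas x w} = R.pos x :=
  rootSystem_longest_betas_eq_posRoots' C R hfin x w hred hlongest
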